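/- arXiv:2004.01947 — 5 statements merged into one kernel-verified Lean document; each statement's English description precedes it below -/
import Mathlib

section
/- Let v(t,x) = a(x)w(t,x) with a continuous, a > 0 on (0,∞), and suppose there exist δ > 0 and x₀ > 0 with w(t,x) ≥ δ for all t ∈ [0,T) and x ∈ (0,x₀). Then the interval (0,x₀) is negatively invariant for the characteristic flow: if X(τ;t,x) < x₀ for some τ in the maximal interval, then X(s;t,x) < x₀ for all s ∈ (σ_t(x), τ), and moreover (d/ds) A(X(s;t,x)) ≥ δ on that interval, where A(x) = ∫₀^x dy/a(y). -/
/-!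
Below `x₀` the characteristic moves strictly to the right, since its speed `a · w` is positive
there. So it cannot be at or above `x₀` at a time `s < τ`: from the last such time `c` up to `τ`
it would stay below `x₀`, hence be strictly increasing, giving `x₀ ≤ X c < X τ < x₀`.
Along the characteristic, the chain rule gives `(A ∘ X)' = X' / a(X) = w ≥ δ`.
-/

open MeasureTheory Set Filter

theorem lt_on_Icc_of_right_lt_of_deriv_pos {f : ℝ → ℝ} {a b y : ℝ}
    (hf : ContinuousOn f (Icc a b)) (hpos : ∀ r ∈ Ioo a b, f r < y → 0 < deriv f r)
    (hb : f b < y) : ∀ r ∈ Icc a b, f r < y := by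
  by_contra! ⟨r, hr, hyr⟩
  set K := Icc a b ∩ f ⁻¹' Ici y
  have hK : IsClosed K := hf.preimage_isClosed_of_isClosed isClosed_Icc isClosed_Ici
  have hKbdd : BddAbove K := bddAbove_Icc.mono inter_subset_left
  set c := sSup K
  have hc : c ∈ K := hK.csSup_mem ⟨r, hr, hyr⟩ hKbdd
  have hcb : c < b := hc.1.2.lt_of_ne fun h => (hb.trans_le (h ▸ hc.2)).false
  have hmono : StrictMonoOn f (Icc c b) := by
    refine strictMonoOn_of_deriv_pos (convex_Icc c b) (hf.mono (Icc_subset_Icc hc.1.1 le_rfl)) ?_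
    rw [interior_Icc]
    intro u hu
    refine hpos u ⟨hc.1.1.trans_lt hu.1, hu.2⟩ (lt_of_not_ge fun hyu => ?_)
    exact (le_csSup hKbdd ⟨⟨hc.1.1.trans hu.1.le, hu.2.le⟩, hyu⟩).not_gt hu.1
  have hfc : f c < f b := hmono (left_mem_Icc.2 hcb.le) (right_mem_Icc.2 hcb.le) hcb
  exact (hc.2.trans_lt (hfc.trans hb)).false

theorem integrableOn_Ioc_zero_of_integrableOn_Ioo_zero_one {f : ℝ → ℝ}
    (hf_cont : ContinuousOn f (Ioi 0)) (hf_int : IntegrableOn f (Ioo 0 1)) (x : ℝ) :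
    IntegrableOn f (Ioc 0 x) := by
  have hIcc : IntegrableOn f (Icc 1 x) :=
    (hf_cont.mono fun y hy => zero_lt_one.trans_le hy.1).integrableOn_Icc
  refine (hf_int.union hIcc).mono_set fun y hy => ?_
  rcases lt_or_ge y 1 with hy1 | hy1
  · exact Or.inl ⟨hy.1, hy1⟩
  · exact Or.inr ⟨hy1, hy.2⟩

theorem hasDerivAt_of_eq_setIntegral_Ioo_zero {f F : ℝ → ℝ}
    (hf_cont : ContinuousOn f (Ioi 0)) (hf_int : IntegrableOn f (Ioo 0 1))
    (hF : ∀ x > (0 : ℝ), F x = ∫ y in Ioo 0 x, f y) {x : ℝ} (hx : 0 < x) :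
    HasDerivAt F (f x) x := by
  have hint : IntervalIntegrable f volume 0 x :=
    (intervalIntegrable_iff_integrableOn_Ioc_of_le hx.le).2
      (integrableOn_Ioc_zero_of_integrableOn_Ioo_zero_one hf_cont hf_int x)
  have hderiv : HasDerivAt (fun u => ∫ y in (0 : ℝ)..u, f y) (f x) x :=
    intervalIntegral.integral_hasDerivAt_right hint
      (hf_cont.stronglyMeasurableAtFilter isOpen_Ioi x hx)
      (hf_cont.continuousAt (Ioi_mem_nhds hx))
  refine hderiv.congr_of_eventuallyEq ?_
  filter_upwards [Ioi_mem_nhds hx] with u hu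
  rw [hF u hu, intervalIntegral.integral_of_le (le_of_lt hu), integral_Ioc_eq_integral_Ioo]

theorem stmt4_general (T δ x₀ : ℝ) (hδ : 0 < δ)
    (a : ℝ → ℝ) (w : ℝ → ℝ → ℝ) (A : ℝ → ℝ)
    (ha_cont : ContinuousOn a (Set.Ici 0))
    (ha_pos : ∀ x > (0:ℝ), 0 < a x)
    (ha_int : MeasureTheory.IntegrableOn (fun y => 1 / a y) (Set.Ioo 0 1))
    (hw : ∀ t ∈ Set.Ico (0:ℝ) T, ∀ x ∈ Set.Ioo (0:ℝ) x₀, δ ≤ w t x)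
    (hA : ∀ x > (0:ℝ), A x = ∫ y in Set.Ioo 0 x, 1 / a y)
    (t x σ T' : ℝ)
    (hσ : 0 ≤ σ) (hT'T : T' ≤ T)
    (X : ℝ → ℝ)
    (hXpos : ∀ s ∈ Set.Ioo σ T', 0 < X s)
    (hODE : ∀ s ∈ Set.Ioo σ T', HasDerivAt X (a (X s) * w s (X s)) s)
    (τ : ℝ) (hτ : τ ∈ Set.Ioo σ T') (hXτ : X τ < x₀) :
    ∀ s ∈ Set.Ioo σ τ, X s < x₀ ∧
      ∃ d : ℝ, δ ≤ d ∧ HasDerivAt (fun r => A (X r)) d s := by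
  intro s hs
  have hsub : Icc s τ ⊆ Ioo σ T' := Icc_subset_Ioo hs.1 hτ.2
  have hinflow : ∀ r ∈ Ioo σ T', X r < x₀ → δ ≤ w r (X r) := fun r hr hXr =>
    hw r ⟨hσ.trans hr.1.le, hr.2.trans_le hT'T⟩ (X r) ⟨hXpos r hr, hXr⟩
  have hbelow : ∀ r ∈ Icc s τ, X r < x₀ := by
    refine lt_on_Icc_of_right_lt_of_deriv_pos
      (fun r hr => (hODE r (hsub hr)).continuousAt.continuousWithinAt) (fun r hr hXr => ?_) hXτ
    have hr' := hsub (Ioo_subset_Icc_self hr)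
    rw [(hODE r hr').deriv]
    exact mul_pos (ha_pos _ (hXpos r hr')) (hδ.trans_le (hinflow r hr' hXr))
  have hs' : s ∈ Ioo σ T' := hsub (left_mem_Icc.2 hs.2.le)
  have hXs : X s < x₀ := hbelow s (left_mem_Icc.2 hs.2.le)
  have hinv_cont : ContinuousOn (fun y => 1 / a y) (Ioi 0) :=
    continuousOn_const.div (ha_cont.mono Ioi_subset_Ici_self) fun y hy => (ha_pos y hy).ne'
  have hAX := (hasDerivAt_of_eq_setIntegral_Ioo_zero hinv_cont ha_int hA (hXpos s hs')).comp s
    (hODE s hs')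
  refine ⟨hXs, _, ?_, hAX⟩
  rw [one_div, inv_mul_cancel_left₀ (ha_pos _ (hXpos s hs')).ne']
  exact hinflow s hs' hXs

/-- Negative invariance of `(0, x₀)` for the characteristic flow of the factorized field
`v(t,x) = a(x) w(t,x)` with inward flow `w ≥ δ > 0` on `(0,x₀)`: if a characteristic `X`
through `(t,x)`, maximal to the left at `σ`, satisfies `X τ < x₀` for some `τ` in its
interval, then `X s < x₀` for all `s ∈ (σ, τ)` and there `(d/ds) A(X s) ≥ δ`, where
`A x = ∫₀ˣ dy / a y`. -/
theorem stmt4 (T δ x₀ : ℝ) (hT : 0 < T) (hδ : 0 < δ) (hx₀ : 0 < x₀)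
    (a : ℝ → ℝ) (w : ℝ → ℝ → ℝ) (A : ℝ → ℝ)
    (ha_cont : ContinuousOn a (Set.Ici 0))
    (ha_pos : ∀ x > (0:ℝ), 0 < a x)
    (ha_int : MeasureTheory.IntegrableOn (fun y => 1 / a y) (Set.Ioo 0 1))
    (hw : ∀ t ∈ Set.Ico (0:ℝ) T, ∀ x ∈ Set.Ioo (0:ℝ) x₀, δ ≤ w t x)
    (hA : ∀ x > (0:ℝ), A x = ∫ y in Set.Ioo 0 x, 1 / a y)
    (t x σ T' : ℝ) (ht : t ∈ Set.Ico (0:ℝ) T) (hx : 0 < x)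
    (hσ : 0 ≤ σ) (hσt : σ < t ∨ (σ = 0 ∧ t = 0)) (hT' : t < T') (hT'T : T' ≤ T)
    (X : ℝ → ℝ) (hXt : X t = x)
    (hXpos : ∀ s ∈ Set.Ioo σ T', 0 < X s)
    (hODE : ∀ s ∈ Set.Ioo σ T', HasDerivAt X (a (X s) * w s (X s)) s)
    (τ : ℝ) (hτ : τ ∈ Set.Ioo σ T') (hXτ : X τ < x₀) :
    ∀ s ∈ Set.Ioo σ τ, X s < x₀ ∧
      ∃ d : ℝ, δ ≤ d ∧ HasDerivAt (fun r => A (X r)) d s :=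
  stmt4_general T δ x₀ hδ a w A ha_cont ha_pos ha_int hw hA t x σ T' hσ hT'T X hXpos hODE τ hτ hXτ
end

section
/- Under the inward-flow assumption (w ≥ δ on (0,x₀)) and with v = a·w sublinear, for every (t,x) the maximal interval of the characteristic is Σ_{t,x} = (σ_t(x), T) if t > 0 (and [0,T) if t = 0), and for every s ∈ [t,T) one has X(s;t,x) ≥ min(x, x₀). -/
/-!
Characteristics are obtained locally from Picard–Lindelöf applied to the field clamped to a band
`[lo, hi] ⊂ (0, ∞)`, where it is globally Lipschitz, and uniqueness glues them into one curve `X`.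
Forward in time the clamp is never active: the level `min x x₀` cannot be crossed downwards because
`v > 0` below `x₀`, and sublinear growth gives `1 + X ≤ (1 + x) e^{KT}`. Backward, `σ_t(x)` is the
infimum of the starting times of arcs ending at `(t, x)`. The backward existence time is uniform
over a band and `X` is bounded on `(σ, t]`, so if `σ > 0` then `X` takes arbitrarily small values
near `σ`; as the sublevels `{X < c}`, `c ≤ x₀`, are invariant backwards in time, `X → 0` at `σ`.
-/

open Set Filter Topology Real Function
open scoped NNReal

theorem le_image_of_deriv_pos_of_lt {g g' : ℝ → ℝ} {p q c : ℝ}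
    (hg : ∀ z ∈ Icc p q, HasDerivWithinAt g (g' z) (Icc p q) z)
    (hpos : ∀ z ∈ Ico p q, g z < c → 0 < g' z) (hp : c ≤ g p) :
    ∀ z ∈ Icc p q, c ≤ g z := by
  intro z hz
  -- the fencing theorem needs a strict inequality on the boundary, so approach `c` from below
  refine le_of_forall_lt_imp_le_of_dense fun c' hc' => ?_
  have := image_le_of_deriv_right_lt_deriv_boundary (f := fun u => -g u) (f' := fun u => -g' u)
    (B := fun _ => -c') (B' := fun _ => 0)
    (fun u hu => (hg u hu).continuousWithinAt.neg)
    (fun u hu => ((hg u (Ico_subset_Icc_self hu)).mono_of_mem_nhdsWithin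
      (Icc_mem_nhdsGE_of_mem hu)).neg)
    (by linarith) (fun _ => hasDerivAt_const _ _)
    (fun u hu hgu => by linarith [hpos u hu (by linarith)]) hz
  linarith

theorem one_add_le_mul_exp_of_deriv_le {f f' : ℝ → ℝ} {K p q : ℝ}
    (hf : ∀ s ∈ Icc p q, HasDerivWithinAt f (f' s) (Icc p q) s)
    (hbound : ∀ s ∈ Ioo p q, f' s ≤ K * (1 + f s)) :
    ∀ s ∈ Icc p q, 1 + f s ≤ (1 + f p) * exp (K * (s - p)) := by
  set φ : ℝ → ℝ := fun s => (1 + f s) * exp (-(K * s))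
  have hφ : ∀ s ∈ Icc p q,
      HasDerivWithinAt φ (exp (-(K * s)) * (f' s - K * (1 + f s))) (Icc p q) s := by
    intro s hs
    have hexp : HasDerivAt (fun s => exp (-(K * s))) (exp (-(K * s)) * -K) s := by
      simpa using ((hasDerivAt_id s).const_mul K).neg.exp
    exact (((hf s hs).const_add 1).mul hexp.hasDerivWithinAt).congr_deriv (by ring)
  have hanti : AntitoneOn φ (Icc p q) := by
    refine antitoneOn_of_hasDerivWithinAt_nonpos
      (f' := fun s => exp (-(K * s)) * (f' s - K * (1 + f s))) (convex_Icc p q)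
      (fun s hs => (hφ s hs).continuousWithinAt) (fun s hs => ?_) (fun s hs => ?_)
    · rw [interior_Icc] at hs ⊢
      exact (hφ s (Ioo_subset_Icc_self hs)).mono Ioo_subset_Icc_self
    · rw [interior_Icc] at hs
      exact mul_nonpos_of_nonneg_of_nonpos (exp_pos _).le (by linarith [hbound s hs])
  intro s hs
  have hp : p ∈ Icc p q := ⟨le_rfl, hs.1.trans hs.2⟩
  calc 1 + f s = φ s * exp (K * s) := by simp only [φ, mul_assoc, ← exp_add]; simp
    _ ≤ φ p * exp (K * s) := by gcongr; exact hanti hp hs hs.1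
    _ = (1 + f p) * exp (K * (s - p)) := by simp only [φ, mul_assoc, ← exp_add]; ring_nf

theorem one_add_le_mul_exp_of_neg_le_deriv {f f' : ℝ → ℝ} {K p q : ℝ}
    (hf : ∀ s ∈ Icc p q, HasDerivWithinAt f (f' s) (Icc p q) s)
    (hbound : ∀ s ∈ Ioo p q, -(K * (1 + f s)) ≤ f' s) :
    ∀ s ∈ Icc p q, 1 + f s ≤ (1 + f q) * exp (K * (q - s)) := by
  set φ : ℝ → ℝ := fun s => (1 + f s) * exp (K * s)
  have hφ : ∀ s ∈ Icc p q,
      HasDerivWithinAt φ (exp (K * s) * (f' s + K * (1 + f s))) (Icc p q) s := by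
    intro s hs
    have hexp : HasDerivAt (fun s => exp (K * s)) (exp (K * s) * K) s := by
      simpa using ((hasDerivAt_id s).const_mul K).exp
    exact (((hf s hs).const_add 1).mul hexp.hasDerivWithinAt).congr_deriv (by ring)
  have hmono : MonotoneOn φ (Icc p q) := by
    refine monotoneOn_of_hasDerivWithinAt_nonneg
      (f' := fun s => exp (K * s) * (f' s + K * (1 + f s))) (convex_Icc p q)
      (fun s hs => (hφ s hs).continuousWithinAt) (fun s hs => ?_) (fun s hs => ?_)
    · rw [interior_Icc] at hs ⊢
      exact (hφ s (Ioo_subset_Icc_self hs)).mono Ioo_subset_Icc_self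
    · rw [interior_Icc] at hs
      exact mul_nonneg (exp_pos _).le (by linarith [hbound s hs])
  intro s hs
  have hq : q ∈ Icc p q := ⟨hs.1.trans hs.2, le_rfl⟩
  calc 1 + f s = φ s * exp (-(K * s)) := by simp only [φ, mul_assoc, ← exp_add]; simp
    _ ≤ φ q * exp (-(K * s)) := by gcongr; exact hmono hs hq hs.2
    _ = (1 + f q) * exp (K * (q - s)) := by simp only [φ, mul_assoc, ← exp_add]; ring_nf

theorem exists_lipschitzOnWith_of_continuousOn_deriv {v v' : ℝ → ℝ → ℝ} {S : Set ℝ} {ρ Q : ℝ}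
    (hS : IsCompact S)
    (hv : ∀ s ∈ S, ∀ y ∈ Icc ρ Q, HasDerivWithinAt (v s) (v' s y) (Icc ρ Q) y)
    (hv' : ContinuousOn (uncurry v') (S ×ˢ Icc ρ Q)) :
    ∃ L : ℝ≥0, ∀ s ∈ S, LipschitzOnWith L (v s) (Icc ρ Q) := by
  obtain ⟨C, hC⟩ := (hS.prod isCompact_Icc).exists_bound_of_continuousOn hv'
  refine ⟨C.toNNReal, fun s hs => (convex_Icc ρ Q).lipschitzOnWith_of_nnnorm_hasDerivWithin_le
    (hv s hs) fun y hy => ?_⟩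
  rw [← NNReal.coe_le_coe, coe_nnnorm, Real.coe_toNNReal']
  exact le_max_of_le_left (hC (s, y) ⟨hs, hy⟩)

theorem IsCompact.exists_pos_mapsTo_Icc {S : Set ℝ} {f : ℝ → ℝ} (hS : IsCompact S)
    (hf : ContinuousOn f S) (hpos : ∀ u ∈ S, 0 < f u) : ∃ ρ > 0, ∃ Q, MapsTo f S (Icc ρ Q) := by
  rcases S.eq_empty_or_nonempty with rfl | hne
  · exact ⟨1, one_pos, 0, mapsTo_empty _ _⟩
  obtain ⟨z, hz, hmin⟩ := hS.exists_isMinOn hne hf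
  obtain ⟨Q, hQ⟩ := hS.exists_bound_of_continuousOn hf
  exact ⟨f z, hpos z hz, Q, fun u hu => ⟨hmin hu, (le_abs_self _).trans (hQ u hu)⟩⟩

theorem IsIntegralCurveOn.congr_eqOn {E : Type*} [NormedAddCommGroup E] [NormedSpace ℝ E]
    {f g : ℝ → E} {v : ℝ → E → E} {s : Set ℝ} (h : IsIntegralCurveOn f v s) (hfg : EqOn f g s) :
    IsIntegralCurveOn g v s := fun u hu => by
  rw [← hfg hu]
  exact (h u hu).congr_of_mem (fun y hy => (hfg hy).symm) hu

theorem IsIntegralCurveOn.Icc_union {E : Type*} [NormedAddCommGroup E] [NormedSpace ℝ E]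
    {f : ℝ → E} {v : ℝ → E → E} {α c β : ℝ} (h₁ : IsIntegralCurveOn f v (Icc α c))
    (h₂ : IsIntegralCurveOn f v (Icc c β)) : IsIntegralCurveOn f v (Icc α β) := by
  intro s hs
  rcases lt_trichotomy s c with hsc | rfl | hcs
  · exact (h₁ s ⟨hs.1, hsc.le⟩).mono_of_mem_nhdsWithin <| mem_of_superset
      (inter_mem_nhdsWithin _ (Iio_mem_nhds hsc)) fun u hu => ⟨hu.1.1, le_of_lt hu.2⟩
  · rw [← Icc_union_Icc_eq_Icc hs.1 hs.2]
    exact (h₁ s ⟨hs.1, le_rfl⟩).union (h₂ s ⟨le_rfl, hs.2⟩)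
  · exact (h₂ s ⟨hcs.le, hs.2⟩).mono_of_mem_nhdsWithin <| mem_of_superset
      (inter_mem_nhdsWithin _ (Ioi_mem_nhds hcs)) fun u hu => ⟨le_of_lt hu.2, hu.1.2⟩

theorem IsIntegralCurveOn.hasDerivWithinAt_Ici {E : Type*} [NormedAddCommGroup E]
    [NormedSpace ℝ E] {f : ℝ → E} {v : ℝ → E → E} {α β s : ℝ}
    (h : IsIntegralCurveOn f v (Icc α β)) (hs : s ∈ Ico α β) :
    HasDerivWithinAt f (v s (f s)) (Ici s) s :=
  (h s (Ico_subset_Icc_self hs)).mono_of_mem_nhdsWithin (Icc_mem_nhdsGE_of_mem hs)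

theorem IsIntegralCurveOn.hasDerivWithinAt_Iic {E : Type*} [NormedAddCommGroup E]
    [NormedSpace ℝ E] {f : ℝ → E} {v : ℝ → E → E} {α β s : ℝ}
    (h : IsIntegralCurveOn f v (Icc α β)) (hs : s ∈ Ioc α β) :
    HasDerivWithinAt f (v s (f s)) (Iic s) s :=
  (h s (Ioc_subset_Icc_self hs)).mono_of_mem_nhdsWithin (Icc_mem_nhdsLE_of_mem hs)

theorem exists_isIntegralCurveOn_of_lipschitzWith {E : Type*} [NormedAddCommGroup E]
    [NormedSpace ℝ E] [CompleteSpace E] {g : ℝ → E → E} {α β t₀ C : ℝ} {L : ℝ≥0}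
    (x₀ : E) (ht₀ : t₀ ∈ Icc α β)
    (hlip : ∀ s ∈ Icc α β, LipschitzWith L (g s))
    (hcont : ∀ y, ContinuousOn (g · y) (Icc α β))
    (hbound : ∀ s ∈ Icc α β, ∀ y, ‖g s y‖ ≤ C) :
    ∃ f : ℝ → E, f t₀ = x₀ ∧ IsIntegralCurveOn f g (Icc α β) := by
  have hC : 0 ≤ C := (norm_nonneg _).trans (hbound t₀ ht₀ x₀)
  have hαβ : 0 ≤ β - α := by linarith [ht₀.1, ht₀.2]
  -- a global Lipschitz bound lets the closed ball be as large as the whole trajectory needs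
  have hPL : IsPicardLindelof g (tmin := α) (tmax := β) ⟨t₀, ht₀⟩ x₀
      ⟨C * (β - α), mul_nonneg hC hαβ⟩ 0 ⟨C, hC⟩ L :=
    { lipschitzOnWith := fun s hs => (hlip s hs).lipschitzOnWith
      continuousOn := fun y _ => hcont y
      norm_le := fun s hs y _ => hbound s hs y
      mul_max_le := by
        show C * max (β - t₀) (t₀ - α) ≤ C * (β - α) - 0
        rw [sub_zero]
        exact mul_le_mul_of_nonneg_left (max_le (by linarith [ht₀.1]) (by linarith [ht₀.2])) hC }
  exact hPL.exists_eq_forall_mem_Icc_hasDerivWithinAt₀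

structure IsAdmissibleField (T K : ℝ) (v : ℝ → ℝ → ℝ) : Prop where
  continuousOn : ContinuousOn (uncurry v) (Ico 0 T ×ˢ Ioi 0)
  exists_lipschitzOnWith :
    ∀ T₁ < T, ∀ ρ > 0, ∀ Q, ∃ L : ℝ≥0, ∀ s ∈ Icc 0 T₁, LipschitzOnWith L (v s) (Icc ρ Q)
  abs_le : ∀ s ∈ Ico 0 T, ∀ y > 0, |v s y| ≤ K * (1 + y)

structure IsInwardField (T K x₀ : ℝ) (v : ℝ → ℝ → ℝ) : Prop
    extends IsAdmissibleField T K v where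
  level_pos : 0 < x₀
  pos_of_mem_Ioo : ∀ s ∈ Ico 0 T, ∀ y ∈ Ioo 0 x₀, 0 < v s y

namespace IsAdmissibleField

variable {T K : ℝ} {v : ℝ → ℝ → ℝ}

theorem of_hasDerivAt {v' : ℝ → ℝ → ℝ}
    (hv : ContinuousOn (uncurry v) (Ico 0 T ×ˢ Ioi 0))
    (hv' : ∀ s ∈ Ico 0 T, ∀ y > 0, HasDerivAt (v s) (v' s y) y)
    (hv'c : ContinuousOn (uncurry v') (Ico 0 T ×ˢ Ioi 0))
    (habs : ∀ s ∈ Ico 0 T, ∀ y > 0, |v s y| ≤ K * (1 + y)) : IsAdmissibleField T K v :=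
  ⟨hv, fun _ hT₁ _ hρ _ => exists_lipschitzOnWith_of_continuousOn_deriv isCompact_Icc
    (fun s hs y hy => (hv' s ⟨hs.1, hs.2.trans_lt hT₁⟩ y (hρ.trans_le hy.1)).hasDerivWithinAt)
    (hv'c.mono (prod_mono (fun _ hs => ⟨hs.1, hs.2.trans_lt hT₁⟩) fun _ hy => hρ.trans_le hy.1)),
    habs⟩

theorem nonneg_of_mem (hv : IsAdmissibleField T K v) {t : ℝ} (ht : t ∈ Ico 0 T) : 0 ≤ K := by
  linarith [hv.abs_le t ht 1 one_pos, abs_nonneg (v t 1)]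

theorem eqOn_of_isIntegralCurveOn (hv : IsAdmissibleField T K v) {α β t₀ : ℝ} {f g : ℝ → ℝ}
    (hα : 0 ≤ α) (hβ : β < T) (ht₀ : t₀ ∈ Icc α β) (hf : IsIntegralCurveOn f v (Icc α β))
    (hfpos : ∀ s ∈ Icc α β, 0 < f s) (hg : IsIntegralCurveOn g v (Icc α β))
    (hgpos : ∀ s ∈ Icc α β, 0 < g s) (heq : f t₀ = g t₀) : EqOn f g (Icc α β) := by
  obtain ⟨ρf, hρf, Qf, hmf⟩ := isCompact_Icc.exists_pos_mapsTo_Icc hf.continuousOn hfpos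
  obtain ⟨ρg, hρg, Qg, hmg⟩ := isCompact_Icc.exists_pos_mapsTo_Icc hg.continuousOn hgpos
  set I := Icc (min ρf ρg) (max Qf Qg)
  have hmf' : MapsTo f (Icc α β) I :=
    hmf.mono_right (Icc_subset_Icc (min_le_left _ _) (le_max_left _ _))
  have hmg' : MapsTo g (Icc α β) I :=
    hmg.mono_right (Icc_subset_Icc (min_le_right _ _) (le_max_right _ _))
  obtain ⟨L, hL⟩ := hv.exists_lipschitzOnWith β hβ _ (lt_min hρf hρg) (max Qf Qg)
  have hLip : ∀ s ∈ Icc α β, LipschitzOnWith L (v s) I := fun s hs => hL s ⟨hα.trans hs.1, hs.2⟩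
  have hright : EqOn f g (Icc t₀ β) := by
    have hsub : Icc t₀ β ⊆ Icc α β := Icc_subset_Icc_left ht₀.1
    exact ODE_solution_unique_of_mem_Icc_right (s := fun _ => I)
      (fun s hs => hLip s (hsub (Ico_subset_Icc_self hs))) (hf.continuousOn.mono hsub)
      (fun s hs => (hf.mono hsub).hasDerivWithinAt_Ici hs)
      (fun s hs => hmf' (hsub (Ico_subset_Icc_self hs))) (hg.continuousOn.mono hsub)
      (fun s hs => (hg.mono hsub).hasDerivWithinAt_Ici hs)
      (fun s hs => hmg' (hsub (Ico_subset_Icc_self hs))) heq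
  have hleft : EqOn f g (Icc α t₀) := by
    have hsub : Icc α t₀ ⊆ Icc α β := Icc_subset_Icc_right ht₀.2
    exact ODE_solution_unique_of_mem_Icc_left (s := fun _ => I)
      (fun s hs => hLip s (hsub (Ioc_subset_Icc_self hs))) (hf.continuousOn.mono hsub)
      (fun s hs => (hf.mono hsub).hasDerivWithinAt_Iic hs)
      (fun s hs => hmf' (hsub (Ioc_subset_Icc_self hs))) (hg.continuousOn.mono hsub)
      (fun s hs => (hg.mono hsub).hasDerivWithinAt_Iic hs)
      (fun s hs => hmg' (hsub (Ioc_subset_Icc_self hs))) heq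
  intro s hs
  rcases le_total s t₀ with hst | hts
  · exact hleft ⟨hs.1, hst⟩
  · exact hright ⟨hts, hs.2⟩

theorem exists_isIntegralCurveOn_projIcc (hv : IsAdmissibleField T K v) {lo hi α β t₀ : ℝ}
    (y₀ : ℝ) (hlo : 0 < lo) (h : lo ≤ hi) (hα : 0 ≤ α) (hβ : β < T) (ht₀ : t₀ ∈ Icc α β) :
    ∃ f : ℝ → ℝ, f t₀ = y₀ ∧
      IsIntegralCurveOn f (fun s y => v s (projIcc lo hi h y)) (Icc α β) := by
  have hbox : Icc α β ×ˢ Icc lo hi ⊆ Ico 0 T ×ˢ Ioi 0 :=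
    prod_mono (fun s hs => ⟨hα.trans hs.1, hs.2.trans_lt hβ⟩) fun y hy => hlo.trans_le hy.1
  obtain ⟨C, hC⟩ := (isCompact_Icc.prod isCompact_Icc).exists_bound_of_continuousOn
    (hv.continuousOn.mono hbox)
  obtain ⟨L, hL⟩ := hv.exists_lipschitzOnWith β hβ lo hlo hi
  refine exists_isIntegralCurveOn_of_lipschitzWith y₀ ht₀ (C := C) (L := L)
    (fun s hs => ?_) (fun y => ?_) (fun s hs y => hC (s, _) ⟨hs, (projIcc lo hi h y).2⟩)
  · have := (hL s ⟨hα.trans hs.1, hs.2⟩).comp (s := univ)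
      ((LipschitzWith.subtype_val _).comp (LipschitzWith.projIcc h)).lipschitzOnWith
      (fun y _ => (projIcc lo hi h y).2)
    rwa [lipschitzOnWith_univ, one_mul, mul_one] at this
  · exact hv.continuousOn.comp (continuous_id.prodMk continuous_const).continuousOn
      fun s hs => hbox ⟨hs, (projIcc lo hi h y).2⟩

theorem exists_backward_integralCurve (hv : IsAdmissibleField T K v) {T₁ ε B : ℝ}
    (hT₁ : T₁ < T) (hε : 0 < ε) (hεB : ε ≤ B) :
    ∃ τ > 0, ∀ s₁ ∈ Icc 0 T₁, ∀ y₁ ∈ Icc ε B, ∃ g : ℝ → ℝ, g s₁ = y₁ ∧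
      (∀ s ∈ Icc (max 0 (s₁ - τ)) s₁, 0 < g s) ∧
      IsIntegralCurveOn g v (Icc (max 0 (s₁ - τ)) s₁) := by
  have hlohi : ε / 2 ≤ B + ε / 2 := by linarith
  have hbox : Icc 0 T₁ ×ˢ Icc (ε / 2) (B + ε / 2) ⊆ Ico 0 T ×ˢ Ioi 0 :=
    prod_mono (fun s hs => ⟨hs.1, hs.2.trans_lt hT₁⟩) fun y hy => (half_pos hε).trans_le hy.1
  obtain ⟨C, hC⟩ := (isCompact_Icc.prod isCompact_Icc).exists_bound_of_continuousOn
    (hv.continuousOn.mono hbox)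
  have hC1 : 0 < max C 1 := lt_max_of_lt_right one_pos
  -- within time `τ` a curve of speed at most `max C 1` moves by at most `ε / 2`
  refine ⟨ε / 2 / max C 1, by positivity, fun s₁ hs₁ y₁ hy₁ => ?_⟩
  set α := max 0 (s₁ - ε / 2 / max C 1)
  have hα : α ≤ s₁ := max_le hs₁.1 (by linarith [div_pos (half_pos hε) hC1])
  obtain ⟨g, hg₁, hg⟩ := hv.exists_isIntegralCurveOn_projIcc y₁ (half_pos hε) hlohi
    (le_max_left _ _) (hs₁.2.trans_lt hT₁) ⟨hα, le_rfl⟩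
  have hclose : ∀ s ∈ Icc α s₁, |g s - y₁| ≤ ε / 2 := by
    intro s hs
    have hmvt := norm_image_sub_le_of_norm_deriv_le_segment' (C := max C 1)
      (fun z hz => (hg z ⟨hs.1.trans hz.1, hz.2⟩).mono (Icc_subset_Icc_left hs.1))
      (fun z hz => (hC (z, _) ⟨⟨(le_max_left _ _).trans (hs.1.trans hz.1), hz.2.le.trans hs₁.2⟩,
        (projIcc _ _ hlohi _).2⟩).trans (le_max_left _ _)) s₁ ⟨hs.2, le_rfl⟩
    rw [hg₁, Real.norm_eq_abs, abs_sub_comm] at hmvt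
    calc |g s - y₁| ≤ max C 1 * (s₁ - s) := hmvt
      _ ≤ max C 1 * (ε / 2 / max C 1) :=
        mul_le_mul_of_nonneg_left (by linarith [hs.1, le_max_right 0 (s₁ - ε / 2 / max C 1)])
          hC1.le
      _ = ε / 2 := mul_div_cancel₀ _ hC1.ne'
  have hproj : ∀ s ∈ Icc α s₁, (projIcc (ε / 2) (B + ε / 2) hlohi (g s) : ℝ) = g s :=
    fun s hs => by
      have := _root_.abs_le.1 (hclose s hs)
      exact congrArg Subtype.val (projIcc_of_mem _ ⟨by linarith [hy₁.1], by linarith [hy₁.2]⟩)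
  refine ⟨g, hg₁, fun s hs => ?_, fun s hs => (hg s hs).congr_deriv ?_⟩
  · rw [← hproj s hs]; exact (half_pos hε).trans_le (projIcc _ _ _ _).2.1
  · show v s (projIcc (ε / 2) (B + ε / 2) hlohi (g s)) = v s (g s)
    rw [hproj s hs]

end IsAdmissibleField

structure IsCharArc (v : ℝ → ℝ → ℝ) (T t x α β : ℝ) (f : ℝ → ℝ) : Prop where
  nonneg : 0 ≤ α
  le_anchor : α ≤ t
  anchor_le : t ≤ β
  right_lt : β < T
  apply_anchor : f t = x
  pos : ∀ s ∈ Icc α β, 0 < f s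
  isIntegralCurveOn : IsIntegralCurveOn f v (Icc α β)

namespace IsInwardField

variable {T K x₀ : ℝ} {v : ℝ → ℝ → ℝ}

theorem exists_forward_arc (hv : IsInwardField T K x₀ v) {t x β : ℝ} (ht : 0 ≤ t) (hx : 0 < x)
    (hβ : β ∈ Ico t T) :
    ∃ f, IsCharArc v T t x t β f ∧ ∀ s ∈ Icc t β, min x x₀ ≤ f s := by
  set m := min x x₀
  have hm : 0 < m := lt_min hx hv.level_pos
  have hK : 0 ≤ K := hv.nonneg_of_mem ⟨ht, hβ.1.trans_lt hβ.2⟩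
  set hi := (1 + x) * exp (K * T)
  have hKT : 0 ≤ K * T := mul_nonneg hK (by linarith [hβ.1, hβ.2])
  have hxhi : x < hi := by nlinarith [one_le_exp hKT]
  have hlohi : m / 2 ≤ hi := by linarith [min_le_left x x₀]
  obtain ⟨f, hft, hf⟩ :=
    hv.exists_isIntegralCurveOn_projIcc x (half_pos hm) hlohi ht hβ.2 ⟨le_rfl, hβ.1⟩
  have hproj_le : ∀ y, (projIcc (m / 2) hi hlohi y : ℝ) ≤ max (m / 2) y := fun y =>
    max_le_max le_rfl (min_le_right _ _)
  have hproj_pos : ∀ y, 0 < (projIcc (m / 2) hi hlohi y : ℝ) := fun y =>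
    (half_pos hm).trans_le (projIcc _ _ _ y).2.1
  have hmem : ∀ s ∈ Icc t β, s ∈ Ico 0 T := fun s hs => ⟨ht.trans hs.1, hs.2.trans_lt hβ.2⟩
  -- below `m` the clamped point lies in `(0, x₀)`, where the field is positive
  have hlower : ∀ s ∈ Icc t β, m ≤ f s :=
    le_image_of_deriv_pos_of_lt hf (fun z hz hfz =>
      hv.pos_of_mem_Ioo z (hmem z (Ico_subset_Icc_self hz)) _ ⟨hproj_pos _,
        (hproj_le _).trans_lt (max_lt (by linarith) hfz) |>.trans_le (min_le_right _ _)⟩)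
      (hft ▸ min_le_left _ _)
  have hupper : ∀ s ∈ Icc t β, f s < hi := by
    intro s hs
    have hexp := one_add_le_mul_exp_of_deriv_le hf (K := K) (fun z hz => by
      have hz' := Ioo_subset_Icc_self hz
      have hp : (projIcc (m / 2) hi hlohi (f z) : ℝ) ≤ f z :=
        (hproj_le _).trans (max_le (by linarith [hlower z hz']) le_rfl)
      have := hv.abs_le z (hmem z hz') _ (hproj_pos (f z))
      nlinarith [le_abs_self (v z (projIcc (m / 2) hi hlohi (f z)))]) s hs
    rw [hft] at hexp
    have : exp (K * (s - t)) ≤ exp (K * T) :=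
      exp_le_exp.2 (mul_le_mul_of_nonneg_left (by linarith [hs.2, hβ.2]) hK)
    nlinarith
  have hproj : ∀ s ∈ Icc t β, (projIcc (m / 2) hi hlohi (f s) : ℝ) = f s := fun s hs =>
    congrArg Subtype.val (projIcc_of_mem _ ⟨by linarith [hlower s hs], (hupper s hs).le⟩)
  refine ⟨f, ⟨ht, le_rfl, hβ.1, hβ.2, hft, fun s hs => hm.trans_le (hlower s hs),
    fun s hs => (hf s hs).congr_deriv ?_⟩, hlower⟩
  show v s (projIcc (m / 2) hi hlohi (f s)) = v s (f s)
  rw [hproj s hs]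

end IsInwardField

/-- The backward lifetime `σ_t(x)`. -/
noncomputable def lifetime (v : ℝ → ℝ → ℝ) (T t x : ℝ) : ℝ :=
  sInf {α | ∃ f, IsCharArc v T t x α t f}

/-- The characteristic `X(s; t, x)`: the common value at `s` of all arcs through `(t, x)`
(a junk value where there is none). -/
noncomputable def charCurve (v : ℝ → ℝ → ℝ) (T t x s : ℝ) : ℝ :=
  Classical.epsilon fun y => ∃ α β f, IsCharArc v T t x α β f ∧ s ∈ Icc α β ∧ f s = y

theorem lifetime_nonneg (v : ℝ → ℝ → ℝ) (T t x : ℝ) : 0 ≤ lifetime v T t x :=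
  Real.sInf_nonneg fun _ ⟨_, hf⟩ => hf.nonneg

namespace IsCharArc

variable {v : ℝ → ℝ → ℝ} {T K t x α β α' β' : ℝ} {f g : ℝ → ℝ}

theorem lifetime_le (hf : IsCharArc v T t x α t f) : lifetime v T t x ≤ α :=
  csInf_le ⟨0, fun _ ⟨_, hf⟩ => hf.nonneg⟩ ⟨f, hf⟩

theorem eqOn (hv : IsAdmissibleField T K v) (hf : IsCharArc v T t x α β f)
    (hg : IsCharArc v T t x α' β' g) : EqOn f g (Icc (max α α') (min β β')) := by
  have hJf : Icc (max α α') (min β β') ⊆ Icc α β :=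
    Icc_subset_Icc (le_max_left _ _) (min_le_left _ _)
  have hJg : Icc (max α α') (min β β') ⊆ Icc α' β' :=
    Icc_subset_Icc (le_max_right _ _) (min_le_right _ _)
  exact hv.eqOn_of_isIntegralCurveOn (hf.nonneg.trans (le_max_left _ _))
    ((min_le_left _ _).trans_lt hf.right_lt)
    ⟨max_le hf.le_anchor hg.le_anchor, le_min hf.anchor_le hg.anchor_le⟩
    (hf.isIntegralCurveOn.mono hJf) (fun s hs => hf.pos s (hJf hs))
    (hg.isIntegralCurveOn.mono hJg) (fun s hs => hg.pos s (hJg hs))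
    (hf.apply_anchor.trans hg.apply_anchor.symm)

theorem charCurve_eq (hv : IsAdmissibleField T K v) (hf : IsCharArc v T t x α β f) {s : ℝ}
    (hs : s ∈ Icc α β) : charCurve v T t x s = f s := by
  obtain ⟨α', β', g, hg, hs', hgs⟩ : ∃ α' β' g, IsCharArc v T t x α' β' g ∧ s ∈ Icc α' β' ∧
      g s = charCurve v T t x s :=
    Classical.epsilon_spec (p := fun y => ∃ α β f, IsCharArc v T t x α β f ∧ s ∈ Icc α β ∧ f s = y)
      ⟨f s, α, β, f, hf, hs, rfl⟩
  rw [← hgs]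
  exact hg.eqOn hv hf ⟨max_le hs'.1 hs.1, le_min hs'.2 hs.2⟩

theorem congr_charCurve (hv : IsAdmissibleField T K v) (hf : IsCharArc v T t x α β f) :
    IsCharArc v T t x α β (charCurve v T t x) := by
  have h : EqOn f (charCurve v T t x) (Icc α β) := fun s hs => (hf.charCurve_eq hv hs).symm
  exact ⟨hf.nonneg, hf.le_anchor, hf.anchor_le, hf.right_lt,
    (h ⟨hf.le_anchor, hf.anchor_le⟩).symm.trans hf.apply_anchor,
    fun s hs => h hs ▸ hf.pos s hs, hf.isIntegralCurveOn.congr_eqOn h⟩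

theorem union (h₁ : IsCharArc v T t x α t f) (h₂ : IsCharArc v T t x t β f) :
    IsCharArc v T t x α β f where
  nonneg := h₁.nonneg
  le_anchor := h₁.le_anchor
  anchor_le := h₂.anchor_le
  right_lt := h₂.right_lt
  apply_anchor := h₁.apply_anchor
  pos s hs := (le_total s t).elim (fun h => h₁.pos s ⟨hs.1, h⟩) fun h => h₂.pos s ⟨h, hs.2⟩
  isIntegralCurveOn := h₁.isIntegralCurveOn.Icc_union h₂.isIntegralCurveOn

theorem extend_left (hf : IsCharArc v T t x α t f) {α₁ s₁ : ℝ} (hα₁ : α₁ ∈ Icc 0 s₁)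
    (hs₁ : s₁ ∈ Icc α t) (hg : IsIntegralCurveOn g v (Icc α₁ s₁))
    (hgpos : ∀ s ∈ Icc α₁ s₁, 0 < g s) (hgf : g s₁ = f s₁) :
    IsCharArc v T t x α₁ t (fun u => if u < s₁ then g u else f u) := by
  set H : ℝ → ℝ := fun u => if u < s₁ then g u else f u
  have hHg : EqOn g H (Icc α₁ s₁) := fun u hu => by
    rcases hu.2.lt_or_eq with h | rfl
    · simp [H, h]
    · simp [H, hgf]
  have hHf : EqOn f H (Icc s₁ t) := fun u hu => by simp [H, not_lt.2 hu.1]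
  refine ⟨hα₁.1, hα₁.2.trans hs₁.2, le_rfl, hf.right_lt, ?_, fun u hu => ?_,
    (hg.congr_eqOn hHg).Icc_union
      ((hf.isIntegralCurveOn.mono (Icc_subset_Icc_left hs₁.1)).congr_eqOn hHf)⟩
  · rw [← hHf ⟨hs₁.2, le_rfl⟩]; exact hf.apply_anchor
  · rcases lt_or_ge u s₁ with h | h
    · rw [← hHg ⟨hu.1, h.le⟩]; exact hgpos u ⟨hu.1, h.le⟩
    · rw [← hHf ⟨h, hu.2⟩]; exact hf.pos u ⟨hs₁.1.trans h, hu.2⟩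

end IsCharArc

theorem IsAdmissibleField.lifetime_lt {T K t x : ℝ} {v : ℝ → ℝ → ℝ}
    (hv : IsAdmissibleField T K v) (ht : t ∈ Ico 0 T) (hx : 0 < x) (ht₀ : 0 < t) :
    lifetime v T t x < t := by
  obtain ⟨τ, hτ, hback⟩ := hv.exists_backward_integralCurve ht.2 hx le_rfl
  obtain ⟨g, hgt, hgpos, hg⟩ := hback t ⟨ht.1, le_rfl⟩ x ⟨le_rfl, le_rfl⟩
  have harc : IsCharArc v T t x (max 0 (t - τ)) t g :=
    ⟨le_max_left _ _, max_le ht.1 (by linarith), le_rfl, ht.2, hgt, hgpos, hg⟩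
  exact harc.lifetime_le.trans_lt (max_lt ht₀ (by linarith))

namespace IsInwardField

variable {T K x₀ t x : ℝ} {v : ℝ → ℝ → ℝ}

theorem exists_isCharArc_charCurve (hv : IsInwardField T K x₀ v) (ht : t ∈ Ico 0 T)
    (hx : 0 < x) {β : ℝ} (hβ : β ∈ Ico t T) :
    IsCharArc v T t x t β (charCurve v T t x) ∧ ∀ s ∈ Icc t β, min x x₀ ≤ charCurve v T t x s := by
  obtain ⟨f, hf, hmin⟩ := hv.exists_forward_arc ht.1 hx hβ
  exact ⟨hf.congr_charCurve hv.toIsAdmissibleField,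
    fun s hs => (hf.charCurve_eq hv.toIsAdmissibleField hs).symm ▸ hmin s hs⟩

theorem charCurve_anchor (hv : IsInwardField T K x₀ v) (ht : t ∈ Ico 0 T) (hx : 0 < x) :
    charCurve v T t x t = x :=
  (hv.exists_isCharArc_charCurve ht hx ⟨le_rfl, ht.2⟩).1.apply_anchor

theorem lifetime_le (hv : IsInwardField T K x₀ v) (ht : t ∈ Ico 0 T) (hx : 0 < x) :
    lifetime v T t x ≤ t :=
  (hv.exists_isCharArc_charCurve ht hx ⟨le_rfl, ht.2⟩).1.lifetime_le

theorem exists_isCharArc_of_lifetime_lt (hv : IsInwardField T K x₀ v) (ht : t ∈ Ico 0 T)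
    (hx : 0 < x) {s : ℝ} (hs : lifetime v T t x < s) :
    ∃ α < s, IsCharArc v T t x α t (charCurve v T t x) := by
  obtain ⟨α, ⟨f, hf⟩, hαs⟩ := exists_lt_of_csInf_lt (s := {α | ∃ f, IsCharArc v T t x α t f})
    ⟨t, _, (hv.exists_isCharArc_charCurve ht hx ⟨le_rfl, ht.2⟩).1⟩ hs
  exact ⟨α, hαs, hf.congr_charCurve hv.toIsAdmissibleField⟩

theorem pos_hasDerivAt_charCurve (hv : IsInwardField T K x₀ v) (ht : t ∈ Ico 0 T) (hx : 0 < x)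
    {s : ℝ} (hs : s ∈ Ioo (lifetime v T t x) T) :
    0 < charCurve v T t x s ∧
      HasDerivAt (charCurve v T t x) (v s (charCurve v T t x s)) s := by
  obtain ⟨α, hαs, hback⟩ := hv.exists_isCharArc_of_lifetime_lt ht hx hs.1
  have hsβ : max s t < (max s t + T) / 2 := by linarith [max_lt hs.2 ht.2]
  have harc := hback.union (hv.exists_isCharArc_charCurve ht hx
    ⟨(le_max_right s t).trans hsβ.le, by linarith [max_lt hs.2 ht.2]⟩).1
  have hmem : s ∈ Icc α ((max s t + T) / 2) := ⟨hαs.le, (le_max_left s t).trans hsβ.le⟩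
  exact ⟨harc.pos s hmem, (harc.isIntegralCurveOn s hmem).hasDerivAt
    (Icc_mem_nhds hαs ((le_max_left s t).trans_lt hsβ))⟩

theorem min_le_charCurve (hv : IsInwardField T K x₀ v) (ht : t ∈ Ico 0 T) (hx : 0 < x)
    {s : ℝ} (hs : s ∈ Ico t T) : min x x₀ ≤ charCurve v T t x s :=
  (hv.exists_isCharArc_charCurve ht hx hs).2 s ⟨hs.1, le_rfl⟩

theorem continuousOn_charCurve (hv : IsInwardField T K x₀ v) (ht : t ∈ Ico 0 T) (hx : 0 < x) :
    ContinuousOn (charCurve v T t x) (Ico t T) := by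
  intro s hs
  have hsβ : s < (s + T) / 2 := by linarith [hs.2]
  have harc := (hv.exists_isCharArc_charCurve ht hx (β := (s + T) / 2)
    ⟨hs.1.trans hsβ.le, by linarith [hs.2]⟩).1
  exact (harc.isIntegralCurveOn.continuousOn s ⟨hs.1, hsβ.le⟩).mono_of_mem_nhdsWithin
    (mem_nhdsWithin.2 ⟨Iio _, isOpen_Iio, hsβ, fun u hu => ⟨hu.2.1, le_of_lt hu.1⟩⟩)

theorem charCurve_le (hv : IsInwardField T K x₀ v) (ht : t ∈ Ico 0 T) (hx : 0 < x)
    {s : ℝ} (hs : s ∈ Ioc (lifetime v T t x) t) :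
    charCurve v T t x s ≤ (1 + x) * exp (K * T) := by
  obtain ⟨α, hαs, harc⟩ := hv.exists_isCharArc_of_lifetime_lt ht hx hs.1
  have hK : 0 ≤ K := hv.nonneg_of_mem ht
  have hexp := one_add_le_mul_exp_of_neg_le_deriv harc.isIntegralCurveOn (K := K)
    (fun z hz => by
      have := hv.abs_le z ⟨harc.nonneg.trans hz.1.le, hz.2.trans ht.2⟩ _
        (harc.pos z (Ioo_subset_Icc_self hz))
      linarith [neg_abs_le (v z (charCurve v T t x z))]) s ⟨hαs.le, hs.2⟩
  rw [harc.apply_anchor] at hexp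
  have : exp (K * (t - s)) ≤ exp (K * T) := exp_le_exp.2 (mul_le_mul_of_nonneg_left
    (by linarith [lifetime_nonneg v T t x, hs.1, ht.2]) hK)
  nlinarith

theorem exists_charCurve_lt (hv : IsInwardField T K x₀ v) (ht : t ∈ Ico 0 T) (hx : 0 < x)
    (hσ : 0 < lifetime v T t x) {c : ℝ} (hc : 0 < c) :
    ∃ s ∈ Ioc (lifetime v T t x) t, charCurve v T t x s < c := by
  by_contra! hge
  set σ := lifetime v T t x
  have hσt : σ < t := hv.lifetime_lt ht hx (hσ.trans_le (hv.lifetime_le ht hx))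
  have hcB := (hge t ⟨hσt, le_rfl⟩).trans (hv.charCurve_le ht hx ⟨hσt, le_rfl⟩)
  obtain ⟨τ, hτ, hback⟩ := hv.exists_backward_integralCurve ht.2 hc hcB
  -- restart backwards from a time `s₁` within `τ / 2` of `σ`: the arc then reaches below `σ`
  set s₁ := min t (σ + τ / 2)
  have hs₁ : s₁ ∈ Ioc σ t := ⟨lt_min hσt (by linarith), min_le_left _ _⟩
  obtain ⟨g, hgs₁, hgpos, hg⟩ := hback s₁ ⟨hσ.le.trans hs₁.1.le, hs₁.2⟩ _
    ⟨hge s₁ hs₁, hv.charCurve_le ht hx hs₁⟩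
  obtain ⟨α, hαs₁, harc⟩ := hv.exists_isCharArc_of_lifetime_lt ht hx hs₁.1
  have hext := harc.extend_left ⟨le_max_left _ _, max_le (hσ.trans hs₁.1).le (by linarith)⟩
    ⟨hαs₁.le, hs₁.2⟩ hg hgpos hgs₁
  have hs₁τ : s₁ ≤ σ + τ / 2 := min_le_right _ _
  exact (max_lt hσ (by linarith)).not_ge hext.lifetime_le

theorem charCurve_lt_of_lt (hv : IsInwardField T K x₀ v) (ht : t ∈ Ico 0 T) (hx : 0 < x)
    {c s₂ s : ℝ} (hc : c ≤ x₀) (hs₂ : s₂ ∈ Ioc (lifetime v T t x) t)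
    (hX : charCurve v T t x s₂ < c) (hs : s ∈ Ioc (lifetime v T t x) s₂) :
    charCurve v T t x s < c := by
  by_contra! hge
  obtain ⟨α, hαs, harc⟩ := hv.exists_isCharArc_of_lifetime_lt ht hx hs.1
  have hsub : Icc s s₂ ⊆ Icc α t := Icc_subset_Icc hαs.le hs₂.2
  have := le_image_of_deriv_pos_of_lt (fun z hz => (harc.isIntegralCurveOn z (hsub hz)).mono hsub)
    (fun z hz hXz => hv.pos_of_mem_Ioo z
      ⟨harc.nonneg.trans (hsub (Ico_subset_Icc_self hz)).1,
        (hsub (Ico_subset_Icc_self hz)).2.trans_lt ht.2⟩ _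
      ⟨harc.pos z (hsub (Ico_subset_Icc_self hz)), hXz.trans_le hc⟩) hge s₂ ⟨hs.2, le_rfl⟩
  linarith

theorem tendsto_charCurve_lifetime (hv : IsInwardField T K x₀ v) (ht : t ∈ Ico 0 T)
    (hx : 0 < x) (hσ : 0 < lifetime v T t x) :
    Tendsto (charCurve v T t x) (𝓝[>] lifetime v T t x) (𝓝 0) := by
  have hσt := hv.lifetime_lt ht hx (hσ.trans_le (hv.lifetime_le ht hx))
  refine tendsto_order.2 ⟨fun a ha => ?_, fun b hb => ?_⟩
  · filter_upwards [Ioc_mem_nhdsGT hσt] with s hs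
    exact ha.trans (hv.pos_hasDerivAt_charCurve ht hx ⟨hs.1, hs.2.trans_lt ht.2⟩).1
  · obtain ⟨s₂, hs₂, hXs₂⟩ := hv.exists_charCurve_lt ht hx hσ (lt_min hb hv.level_pos)
    filter_upwards [Ioc_mem_nhdsGT hs₂.1] with s hs
    exact (hv.charCurve_lt_of_lt ht hx (min_le_right _ _) hs₂ hXs₂ hs).trans_le (min_le_left _ _)

end IsInwardField

theorem stmt5_general (T K δ x₀ : ℝ) (hδ : 0 < δ) (hx₀ : 0 < x₀)
    (a : ℝ → ℝ) (w : ℝ → ℝ → ℝ) (vx : ℝ → ℝ → ℝ)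
    (ha_cont : ContinuousOn a (Set.Ici 0))
    (ha_pos : ∀ x > (0:ℝ), 0 < a x)
    (hw_cont : ContinuousOn (fun p : ℝ × ℝ => w p.1 p.2) (Set.Ico 0 T ×ˢ Set.Ici 0))
    (hvx : ∀ t ∈ Set.Ico (0:ℝ) T, ∀ x > (0:ℝ),
      HasDerivAt (fun y => a y * w t y) (vx t x) x)
    (hvx_cont : ContinuousOn (fun p : ℝ × ℝ => vx p.1 p.2) (Set.Ico 0 T ×ˢ Set.Ioi 0))
    (h_sub : ∀ t ∈ Set.Ico (0:ℝ) T, ∀ x > (0:ℝ), |a x * w t x| ≤ K * (1 + x))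
    (h_in : ∀ t ∈ Set.Ico (0:ℝ) T, ∀ x ∈ Set.Ioo (0:ℝ) x₀, δ ≤ w t x) :
    ∀ t ∈ Set.Ico (0:ℝ) T, ∀ x > (0:ℝ),
      ∃ (σ : ℝ) (X : ℝ → ℝ),
        0 ≤ σ ∧ (0 < t → σ < t) ∧ (t = 0 → σ = 0) ∧
        X t = x ∧
        (∀ s ∈ Set.Ioo σ T, 0 < X s ∧ HasDerivAt X (a (X s) * w s (X s)) s) ∧
        (t = 0 → ContinuousOn X (Set.Ico 0 T) ∧ ∀ s ∈ Set.Ico (0:ℝ) T, 0 < X s) ∧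
        (∀ s ∈ Set.Ico t T, min x x₀ ≤ X s) ∧
        (0 < σ → Filter.Tendsto X (nhdsWithin σ (Set.Ioi σ)) (nhds 0)) := by
  intro t ht x hx
  have hv : IsInwardField T K x₀ fun s y => a y * w s y :=
    { toIsAdmissibleField := .of_hasDerivAt
        ((ha_cont.comp continuousOn_snd fun _ hp => mem_Ici.2 (le_of_lt hp.2)).mul
          (hw_cont.mono (prod_mono subset_rfl Ioi_subset_Ici_self))) hvx hvx_cont h_sub
      level_pos := hx₀
      pos_of_mem_Ioo := fun s hs y hy => mul_pos (ha_pos y hy.1) (hδ.trans_le (h_in s hs y hy)) }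
  refine ⟨lifetime _ T t x, charCurve _ T t x, lifetime_nonneg _ T t x,
    hv.lifetime_lt ht hx, fun ht₀ => ?_, hv.charCurve_anchor ht hx,
    fun s hs => hv.pos_hasDerivAt_charCurve ht hx hs, fun ht₀ => ?_,
    fun s hs => hv.min_le_charCurve ht hx hs, hv.tendsto_charCurve_lifetime ht hx⟩
  · exact le_antisymm (ht₀ ▸ hv.lifetime_le ht hx) (lifetime_nonneg _ T t x)
  · subst ht₀
    exact ⟨hv.continuousOn_charCurve ht hx,
      fun s hs => (lt_min hx hx₀).trans_le (hv.min_le_charCurve ht hx hs)⟩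

/-- Forward global existence of characteristics under the inward-flow assumption:
for the field `v(t,x) = a(x) w(t,x)`, sublinear and with `w ≥ δ > 0` on `(0,x₀)`,
every point `(t,x)` carries a maximal characteristic `X` defined on `(σ, T)`
(with `σ = 0` and the solution defined on `[0,T)` when `t = 0`), i.e. the maximal
interval is `Σ_{t,x} = (σ_t(x), T)`; it satisfies `X s ≥ min(x, x₀)` for all
`s ∈ [t, T)`, and when `σ > 0` it reaches the boundary: `X s → 0` as `s → σ⁺`. -/
theorem stmt5 (T K δ x₀ : ℝ) (hT : 0 < T) (hK : 0 < K) (hδ : 0 < δ) (hx₀ : 0 < x₀)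
    (a : ℝ → ℝ) (w : ℝ → ℝ → ℝ) (vx : ℝ → ℝ → ℝ)
    (ha_cont : ContinuousOn a (Set.Ici 0))
    (ha_pos : ∀ x > (0:ℝ), 0 < a x)
    (hw_cont : ContinuousOn (fun p : ℝ × ℝ => w p.1 p.2) (Set.Ico 0 T ×ˢ Set.Ici 0))
    (hvx : ∀ t ∈ Set.Ico (0:ℝ) T, ∀ x > (0:ℝ),
      HasDerivAt (fun y => a y * w t y) (vx t x) x)
    (hvx_cont : ContinuousOn (fun p : ℝ × ℝ => vx p.1 p.2) (Set.Ico 0 T ×ˢ Set.Ioi 0))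
    (h_sub : ∀ t ∈ Set.Ico (0:ℝ) T, ∀ x > (0:ℝ), |a x * w t x| ≤ K * (1 + x))
    (h_in : ∀ t ∈ Set.Ico (0:ℝ) T, ∀ x ∈ Set.Ioo (0:ℝ) x₀, δ ≤ w t x) :
    ∀ t ∈ Set.Ico (0:ℝ) T, ∀ x > (0:ℝ),
      ∃ (σ : ℝ) (X : ℝ → ℝ),
        0 ≤ σ ∧ (0 < t → σ < t) ∧ (t = 0 → σ = 0) ∧
        X t = x ∧
        (∀ s ∈ Set.Ioo σ T, 0 < X s ∧ HasDerivAt X (a (X s) * w s (X s)) s) ∧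
        (t = 0 → ContinuousOn X (Set.Ico 0 T) ∧ ∀ s ∈ Set.Ico (0:ℝ) T, 0 < X s) ∧
        (∀ s ∈ Set.Ico t T, min x x₀ ≤ X s) ∧
        (0 < σ → Filter.Tendsto X (nhdsWithin σ (Set.Ioi σ)) (nhds 0)) :=
  stmt5_general T K δ x₀ hδ hx₀ a w vx ha_cont ha_pos hw_cont hvx hvx_cont h_sub h_in
end

section
/- Under assumptions (A1)–(A7), for 0 < s₁ < s₂ < t < T we have X(t;s₂,0⁺) < X(t;s₁,0⁺): characteristic curves emanating from the boundary at later times lie strictly below those emanating earlier. -/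
open MeasureTheory Set Filter

/-- The setting of the linear annex: a degenerate transport field `v = a·w` on
`[0,T) × (0,∞)` satisfying assumptions (A1)–(A7), together with its characteristic
flow `X s t x` (position at time `s` of the characteristic through `(t,x)`) and the
backward-lifetime map `σ t x = inf Σ_{t,x}`. -/
structure LSFlow where
  T : ℝ
  K : ℝ
  δ : ℝ
  x₀ : ℝ
  a : ℝ → ℝ
  w : ℝ → ℝ → ℝ
  wx : ℝ → ℝ → ℝ
  X : ℝ → ℝ → ℝ → ℝ
  σ : ℝ → ℝ → ℝ
  hT : 0 < T
  hK : 0 < K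
  hδ : 0 < δ
  hx₀ : 0 < x₀
  /-- (A3) `a` is continuous on `[0,∞)` -/
  ha_cont : ContinuousOn a (Set.Ici 0)
  /-- (A3) `a` is positive on `(0,∞)` -/
  ha_pos : ∀ x > (0:ℝ), 0 < a x
  /-- (A5) `1/a` is integrable near the origin -/
  ha_int : MeasureTheory.IntegrableOn (fun y => 1 / a y) (Set.Ioo 0 1)
  /-- (A5) the primitive of `1/a` diverges at infinity -/
  ha_div : Filter.Tendsto (fun x => ∫ y in Set.Ioo (0:ℝ) x, 1 / a y)
    Filter.atTop Filter.atTop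
  /-- (A4) `w` is continuous on `[0,T) × [0,∞)` -/
  hw_cont : ContinuousOn (fun p : ℝ × ℝ => w p.1 p.2) (Set.Ico 0 T ×ˢ Set.Ici 0)
  /-- (A4) `wx` is the partial derivative of `w` in the space variable -/
  hwx : ∀ t ∈ Set.Ioo (0:ℝ) T, ∀ x > (0:ℝ), HasDerivAt (w t) (wx t x) x
  /-- (A6) `∂ₓ w ∈ L¹((0,T) × (0,1))` -/
  hwx_int : MeasureTheory.IntegrableOn (fun p : ℝ × ℝ => wx p.1 p.2)
    (Set.Ioo 0 T ×ˢ Set.Ioo 0 1)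
  /-- (A1) sublinearity of the field `v = a·w` -/
  h_sub : ∀ t ∈ Set.Ico (0:ℝ) T, ∀ x > (0:ℝ), |a x * w t x| ≤ K * (1 + x)
  /-- (A7) inward flow near the boundary -/
  h_in : ∀ t ∈ Set.Ico (0:ℝ) T, ∀ x ∈ Set.Ioo (0:ℝ) x₀, δ ≤ w t x
  /-- backward lifetimes are nonnegative -/
  hσ_nonneg : ∀ t x, 0 ≤ σ t x
  hσ_le : ∀ t x, σ t x ≤ t
  hσ_lt : ∀ t x, 0 < t → 0 < x → σ t x < t
  /-- the characteristic through `(t,x)` passes through `x` at time `t` -/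
  h_init : ∀ t ∈ Set.Ico (0:ℝ) T, ∀ x > (0:ℝ), X t t x = x
  /-- positivity of characteristics on their maximal interval `(σ t x, T)` -/
  h_pos : ∀ t ∈ Set.Ico (0:ℝ) T, ∀ x > (0:ℝ), ∀ s ∈ Set.Ioo (σ t x) T, 0 < X s t x
  /-- the ODE `∂ₛ X = a(X) w(s, X)` on the maximal interval -/
  h_ode : ∀ t ∈ Set.Ico (0:ℝ) T, ∀ x > (0:ℝ), ∀ s ∈ Set.Ioo (σ t x) T,
    HasDerivAt (fun r => X r t x) (a (X s t x) * w s (X s t x)) s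
  /-- maximality: when `σ t x > 0` the characteristic reaches the boundary -/
  h_max : ∀ t ∈ Set.Ico (0:ℝ) T, ∀ x > (0:ℝ), 0 < σ t x →
    Filter.Tendsto (fun s => X s t x) (nhdsWithin (σ t x) (Set.Ioi (σ t x))) (nhds 0)
  /-- semigroup property / uniqueness of characteristics -/
  h_semigroup : ∀ t ∈ Set.Ico (0:ℝ) T, ∀ x > (0:ℝ), ∀ s ∈ Set.Ioo (σ t x) T,
    s ∈ Set.Ico (0:ℝ) T → σ s (X s t x) = σ t x ∧
      ∀ r ∈ Set.Ioo (σ t x) T, X r s (X s t x) = X r t x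

/-- The separating point `x_c(t)` between characteristics coming from the initial
data and those emanating from the boundary. -/
noncomputable def LSFlow.xc (F : LSFlow) (t : ℝ) : ℝ :=
  sInf {x : ℝ | 0 < x ∧ F.σ t x = 0}

/-! Below height `x₀` a characteristic moves with speed at least `δ·a`, so `A = ∫₀ˣ 1/a`
decreases at rate at least `δ` backward along it: started at height `x`, it reaches the
boundary within time `A(x)/δ`, whence `σ(s, x) → s` as `x → 0⁺`. Two characteristics never
meet unless they have the same backward lifetime (semigroup property), and the one with the
later lifetime leaves the boundary while the other is already positive, so by continuity it
stays below.
Choosing `s₁ < σ(s₂, x_a) < σ(s₂, x_b)` and letting the starting heights tend to `0` gives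
`L₂ ≤ X(t; s₂, x_b) < X(t; s₂, x_a) ≤ L₁`. -/

open scoped Topology

theorem le_right_of_hasDerivAt_pos_below {f f' : ℝ → ℝ} {a b M : ℝ}
    (hf : ∀ s ∈ Icc a b, HasDerivAt f (f' s) s) (hpos : ∀ s ∈ Icc a b, f s < M → 0 < f' s)
    (hb : f b < M) {s₀ : ℝ} (hs₀ : s₀ ∈ Icc a b) : f s₀ ≤ f b := by
  by_contra! h
  obtain ⟨ℓ, hbℓ, hℓ⟩ := exists_between (lt_min h hb)
  have hsub : Icc s₀ b ⊆ Icc a b := Icc_subset_Icc_left hs₀.1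
  have hcont : ContinuousOn f (Icc s₀ b) := fun s hs =>
    (hf s (hsub hs)).continuousAt.continuousWithinAt
  have hS : IsCompact (Icc s₀ b ∩ f ⁻¹' Ici ℓ) :=
    isCompact_Icc.of_isClosed_subset
      (hcont.preimage_isClosed_of_isClosed isClosed_Icc isClosed_Ici) inter_subset_left
  obtain ⟨c, ⟨hc, hℓc⟩, hcmax⟩ :=
    hS.exists_isGreatest ⟨s₀, ⟨le_rfl, hs₀.2⟩, (hℓ.trans_le (min_le_left _ _)).le⟩
  have hcb : c < b := hc.2.lt_of_ne (by rintro rfl; exact hbℓ.not_ge hℓc)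
  obtain ⟨ξ, hξ, hslope⟩ := exists_hasDerivAt_eq_slope f f' hcb
    (hcont.mono (Icc_subset_Icc_left hc.1)) fun s hs => hf s (hsub ⟨hc.1.trans hs.1.le, hs.2.le⟩)
  have hξS : ξ ∈ Icc s₀ b := ⟨hc.1.trans hξ.1.le, hξ.2.le⟩
  have hfξ : f ξ < ℓ := not_le.1 fun h => hξ.1.not_ge (hcmax ⟨hξS, h⟩)
  have hf'ξ : 0 < f' ξ := hpos ξ (hsub hξS) (hfξ.trans (hℓ.trans_le (min_le_right _ _)))
  rw [hslope] at hf'ξ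
  have hfc : ℓ ≤ f c := hℓc
  exact ((div_pos_iff_of_pos_right (sub_pos.2 hcb)).1 hf'ξ).not_ge (by linarith)

namespace LSFlow

variable (F : LSFlow)

noncomputable def primitiveInvA (x : ℝ) : ℝ := ∫ y in (0:ℝ)..x, 1 / F.a y

lemma continuousAt_inv_a {x : ℝ} (hx : 0 < x) : ContinuousAt (fun y => 1 / F.a y) x :=
  continuousAt_const.div ((F.ha_cont x hx.le).continuousAt (Ici_mem_nhds hx))
    (F.ha_pos x hx).ne'

lemma intervalIntegrable_inv_a {x : ℝ} (hx0 : 0 ≤ x) (hx1 : x ≤ 1) :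
    IntervalIntegrable (fun y => 1 / F.a y) volume 0 x :=
  (intervalIntegrable_iff_integrableOn_Ioo_of_le hx0).2
    (F.ha_int.mono_set (Ioo_subset_Ioo le_rfl hx1))

lemma primitiveInvA_pos {x : ℝ} (hx0 : 0 < x) (hx1 : x ≤ 1) : 0 < F.primitiveInvA x :=
  intervalIntegral.intervalIntegral_pos_of_pos_on (F.intervalIntegrable_inv_a hx0.le hx1)
    (fun y hy => one_div_pos.2 (F.ha_pos y hy.1)) hx0

lemma hasDerivAt_primitiveInvA {x : ℝ} (hx : x ∈ Ioo (0:ℝ) 1) :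
    HasDerivAt F.primitiveInvA (1 / F.a x) x :=
  intervalIntegral.integral_hasDerivAt_right (F.intervalIntegrable_inv_a hx.1.le hx.2.le)
    (ContinuousOn.stronglyMeasurableAtFilter isOpen_Ioi
      (fun _ hy => (F.continuousAt_inv_a hy).continuousWithinAt) x hx.1)
    (F.continuousAt_inv_a hx.1)

lemma tendsto_primitiveInvA_nhdsGT_zero :
    Tendsto F.primitiveInvA (𝓝[>] 0) (𝓝 0) := by
  have hint : IntegrableOn (fun y => 1 / F.a y) (uIcc (0:ℝ) 1) := by
    rw [uIcc_of_le zero_le_one, integrableOn_Icc_iff_integrableOn_Ioo]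
    exact F.ha_int
  have hcont := intervalIntegral.continuousOn_primitive_interval hint
  rw [uIcc_of_le zero_le_one] at hcont
  rw [← nhdsWithin_Ioo_eq_nhdsGT one_pos]
  have h := ((hcont 0 (left_mem_Icc.2 zero_le_one)).mono Ioo_subset_Icc_self).tendsto
  rwa [intervalIntegral.integral_same] at h

lemma X_mem_Ioc {t x r : ℝ} (ht : t ∈ Ico 0 F.T) (hx0 : 0 < x) (hx₀ : x < F.x₀)
    (hr : r ∈ Ioc (F.σ t x) t) : F.X r t x ∈ Ioc 0 x := by
  have hsub : Icc r t ⊆ Ioo (F.σ t x) F.T := fun s hs =>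
    ⟨hr.1.trans_le hs.1, hs.2.trans_lt ht.2⟩
  have hpos : ∀ s ∈ Icc r t, 0 < F.X s t x := fun s hs => F.h_pos t ht x hx0 s (hsub hs)
  have hinit := F.h_init t ht x hx0
  refine ⟨hpos r ⟨le_rfl, hr.2⟩, ?_⟩
  have h := le_right_of_hasDerivAt_pos_below (f := fun s => F.X s t x) (M := F.x₀)
    (fun s hs => F.h_ode t ht x hx0 s (hsub hs))
    (fun s hs hXs => mul_pos (F.ha_pos _ (hpos s hs)) (F.hδ.trans_le
      (F.h_in s ⟨(F.hσ_nonneg t x).trans (hsub hs).1.le, (hsub hs).2⟩ _ ⟨hpos s hs, hXs⟩)))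
    (hinit.trans_lt hx₀) ⟨le_rfl, hr.2⟩
  rwa [hinit] at h

lemma hasDerivAt_primitiveInvA_comp_X {t x r : ℝ} (ht : t ∈ Ico 0 F.T) (hx0 : 0 < x)
    (hx₀ : x < F.x₀) (hx1 : x < 1) (hr : r ∈ Ioc (F.σ t x) t) :
    HasDerivAt (fun s => F.primitiveInvA (F.X s t x)) (F.w r (F.X r t x)) r := by
  have hXr := F.X_mem_Ioc ht hx0 hx₀ hr
  have hchain := (F.hasDerivAt_primitiveInvA ⟨hXr.1, hXr.2.trans_lt hx1⟩).comp r
    (F.h_ode t ht x hx0 r ⟨hr.1, hr.2.trans_lt ht.2⟩)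
  rwa [← mul_assoc, one_div_mul_cancel (F.ha_pos _ hXr.1).ne', one_mul] at hchain

lemma delta_mul_sub_sigma_le {t x : ℝ} (ht : t ∈ Ioo 0 F.T) (hx0 : 0 < x) (hx₀ : x < F.x₀)
    (hx1 : x < 1) : F.δ * (t - F.σ t x) ≤ F.primitiveInvA x := by
  have htI : t ∈ Ico 0 F.T := ⟨ht.1.le, ht.2⟩
  have hσt : F.σ t x < t := F.hσ_lt t x ht.1 hx0
  have hD := fun r (hr : r ∈ Ioc (F.σ t x) t) =>
    F.hasDerivAt_primitiveInvA_comp_X htI hx0 hx₀ hx1 hr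
  have hw : ∀ r ∈ interior (Ioc (F.σ t x) t),
      F.δ ≤ deriv (fun s => F.primitiveInvA (F.X s t x)) r := by
    intro r hr
    rw [interior_Ioc] at hr
    have hXr := F.X_mem_Ioc htI hx0 hx₀ ⟨hr.1, hr.2.le⟩
    rw [(hD r ⟨hr.1, hr.2.le⟩).deriv]
    exact F.h_in r ⟨(F.hσ_nonneg t x).trans hr.1.le, hr.2.trans ht.2⟩ _
      ⟨hXr.1, hXr.2.trans_lt hx₀⟩
  have hbound : ∀ r ∈ Ioo (F.σ t x) t, F.δ * (t - r) ≤ F.primitiveInvA x := by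
    intro r hr
    have hmvt := (convex_Ioc (F.σ t x) t).mul_sub_le_image_sub_of_le_deriv
      (fun s hs => (hD s hs).continuousAt.continuousWithinAt)
      (fun s hs => (hD s (interior_subset hs)).differentiableAt.differentiableWithinAt) hw
      r ⟨hr.1, hr.2.le⟩ t ⟨hσt, le_rfl⟩ hr.2.le
    have hXr := F.X_mem_Ioc htI hx0 hx₀ ⟨hr.1, hr.2.le⟩
    have hAr := F.primitiveInvA_pos hXr.1 (hXr.2.trans hx1.le)
    simp only [F.h_init t htI x hx0] at hmvt
    linarith
  have hlim : Tendsto (fun r => F.δ * (t - r)) (𝓝[>] (F.σ t x)) (𝓝 (F.δ * (t - F.σ t x))) :=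
    ((continuous_const.sub continuous_id).const_mul F.δ).continuousWithinAt.tendsto
  exact le_of_tendsto hlim (eventually_of_mem (Ioo_mem_nhdsGT hσt) hbound)

lemma tendsto_sigma_nhdsGT_zero {t : ℝ} (ht : t ∈ Ioo 0 F.T) :
    Tendsto (F.σ t) (𝓝[>] 0) (𝓝 t) := by
  have hlower : Tendsto (fun x => t - F.primitiveInvA x / F.δ) (𝓝[>] 0) (𝓝 t) := by
    simpa using tendsto_const_nhds.sub (F.tendsto_primitiveInvA_nhdsGT_zero.div_const F.δ)
  refine tendsto_of_tendsto_of_tendsto_of_le_of_le' hlower tendsto_const_nhds ?_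
    (Eventually.of_forall (F.hσ_le t))
  filter_upwards [Ioo_mem_nhdsGT (lt_min F.hx₀ one_pos)] with x hx
  have := F.delta_mul_sub_sigma_le ht hx.1 (hx.2.trans_le (min_le_left _ _))
    (hx.2.trans_le (min_le_right _ _))
  rw [sub_le_comm, le_div_iff₀ F.hδ]
  linarith

lemma X_lt_X_of_sigma_lt {t₁ x₁ t₂ x₂ t : ℝ} (ht₁ : t₁ ∈ Ico 0 F.T) (hx₁ : 0 < x₁)
    (hx₂ : 0 < x₂) (hσ : F.σ t₁ x₁ < F.σ t₂ x₂) (ht₂ : t₂ ≤ t) (ht : t < F.T) :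
    F.X t t₂ x₂ < F.X t t₁ x₁ := by
  set σ₂ := F.σ t₂ x₂
  have hσ₂ : 0 < σ₂ := (F.hσ_nonneg t₁ x₁).trans_lt hσ
  have ht₂I : t₂ ∈ Ico 0 F.T := ⟨hσ₂.le.trans (F.hσ_le t₂ x₂), ht₂.trans_lt ht⟩
  have hσ₂t : σ₂ < t := (F.hσ_lt t₂ x₂ (hσ₂.trans_le (F.hσ_le t₂ x₂)) hx₂).trans_le ht₂
  have hI : Ioo σ₂ F.T ⊆ Ioo (F.σ t₁ x₁) F.T := Ioo_subset_Ioo_left hσ.le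
  set g : ℝ → ℝ := fun r => F.X r t₁ x₁ - F.X r t₂ x₂
  have hg_ne : ∀ r ∈ Ioo σ₂ F.T, g r ≠ 0 := by
    intro r hr hr0
    have hrI : r ∈ Ico 0 F.T := ⟨hσ₂.le.trans hr.1.le, hr.2⟩
    have h₁ := (F.h_semigroup t₁ ht₁ x₁ hx₁ r (hI hr) hrI).1
    have h₂ := (F.h_semigroup t₂ ht₂I x₂ hx₂ r hr hrI).1
    rw [sub_eq_zero.1 hr0] at h₁
    exact hσ.ne (h₁.symm.trans h₂)
  have hg_cont : ContinuousOn g (Ioo σ₂ F.T) := fun r hr =>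
    ((F.h_ode t₁ ht₁ x₁ hx₁ r (hI hr)).continuousAt.sub
      (F.h_ode t₂ ht₂I x₂ hx₂ r hr).continuousAt).continuousWithinAt
  have hσ₂I : σ₂ ∈ Ioo (F.σ t₁ x₁) F.T := ⟨hσ, hσ₂t.trans ht⟩
  have hg_lim : Tendsto g (𝓝[>] σ₂) (𝓝 (F.X σ₂ t₁ x₁ - 0)) :=
    ((F.h_ode t₁ ht₁ x₁ hx₁ σ₂ hσ₂I).continuousAt.tendsto.mono_left nhdsWithin_le_nhds).sub
      (F.h_max t₂ ht₂I x₂ hx₂ hσ₂)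
  rw [sub_zero] at hg_lim
  obtain ⟨r₀, hr₀, hgr₀⟩ := ((eventually_mem_set.2 (Ioo_mem_nhdsGT hσ₂I.2)).and
    (hg_lim.eventually (eventually_gt_nhds (F.h_pos t₁ ht₁ x₁ hx₁ σ₂ hσ₂I)))).exists
  by_contra! hle
  obtain ⟨c, hc, hgc⟩ := isPreconnected_Ioo.intermediate_value ⟨hσ₂t, ht⟩ hr₀ hg_cont
    ⟨sub_nonpos.2 hle, hgr₀.le⟩
  exact hg_ne c hc hgc

end LSFlow

/-- Lemma 4.9: characteristics emanating from the boundary at later times stay strictly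
below those emanating earlier: if `0 < s₁ < s₂ < t < T` and `Lᵢ = X(t; sᵢ, 0⁺)` are the
boundary limits, then `L₂ < L₁`. -/
theorem stmt10 (F : LSFlow) (s₁ s₂ t L₁ L₂ : ℝ)
    (hs₁ : 0 < s₁) (hs₁₂ : s₁ < s₂) (hs₂t : s₂ < t) (htT : t < F.T)
    (hL₁ : Filter.Tendsto (fun x => F.X t s₁ x) (nhdsWithin 0 (Set.Ioi 0)) (nhds L₁))
    (hL₂ : Filter.Tendsto (fun x => F.X t s₂ x) (nhdsWithin 0 (Set.Ioi 0)) (nhds L₂)) :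
    L₂ < L₁ := by
  have hs₂ : 0 < s₂ := hs₁.trans hs₁₂
  have hs₁I : s₁ ∈ Ico 0 F.T := ⟨hs₁.le, by linarith⟩
  have hs₂I : s₂ ∈ Ico 0 F.T := ⟨hs₂.le, by linarith⟩
  have hσ_gt : ∀ {b}, b < s₂ → ∀ᶠ x in 𝓝[>] 0, 0 < x ∧ b < F.σ s₂ x := fun hb =>
    eventually_mem_nhdsWithin.and
      ((F.tendsto_sigma_nhdsGT_zero ⟨hs₂, by linarith⟩).eventually (eventually_gt_nhds hb))
  obtain ⟨xa, hxa0, hxa⟩ := (hσ_gt hs₁₂).exists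
  obtain ⟨xb, hxb0, hxb⟩ := (hσ_gt (F.hσ_lt s₂ xa hs₂ hxa0)).exists
  have hL₁a : F.X t s₂ xa ≤ L₁ := ge_of_tendsto hL₁ <|
    eventually_mem_nhdsWithin.mono fun y hy =>
      (F.X_lt_X_of_sigma_lt hs₁I hy hxa0 ((F.hσ_lt s₁ y hs₁ hy).trans hxa) hs₂t.le htT).le
  have hba : F.X t s₂ xb < F.X t s₂ xa :=
    F.X_lt_X_of_sigma_lt hs₂I hxa0 hxb0 hxb hs₂t.le htT
  have hL₂b : L₂ ≤ F.X t s₂ xb := le_of_tendsto hL₂ <|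
    (hσ_gt (F.hσ_lt s₂ xb hs₂ hxb0)).mono fun x hx =>
      (F.X_lt_X_of_sigma_lt hs₂I hxb0 hx.1 hx.2 hs₂t.le htT).le
  linarith
end

section
/- Let f be a solution to the Lifshitz–Slyozov equation on [0,T) with T < ∞, under hypotheses (H1)–(H7), and assume Φ(x) := b(x)/a(x) ≥ Φ₀ := lim_{y→0⁺}Φ(y) for all x > 0. Then u(t) − Φ₀ ≥ (u(0) − Φ₀)·exp(−T·sup_{t∈(0,T)} ∫₀^∞ a(x) f(t,x) dx) > 0 for every t ∈ [0,T); in particular u stays strictly above Φ₀ on [0,T]. -/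
/-!
Write `v = u − Φ₀` and `g(t) = ∫ a f`. Since `Φ ≥ Φ₀`,
`v' + g v = ∫ a (Φ − Φ₀) f ≥ 0`, so `v' ≥ −M v` wherever `v > 0`, with `M = sup g`.
Hence `v e^{Mt}` is nondecreasing as long as it stays positive; as it starts positive,
it can never drop below its initial value, which gives `v(t) ≥ v(0) e^{−Mt} ≥ v(0) e^{−MT}`.
-/

open MeasureTheory Set Real

theorem exists_first_le_of_continuousOn {z : ℝ → ℝ} {a b c : ℝ}
    (hz : ContinuousOn z (Icc a b)) (ha : c < z a) (hb : z b ≤ c) (hab : a ≤ b) :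
    ∃ s ∈ Ioc a b, z s ≤ c ∧ ∀ y ∈ Ico a s, c < z y := by
  set A := Icc a b ∩ z ⁻¹' Iic c
  have hA_closed : IsClosed A := hz.preimage_isClosed_of_isClosed isClosed_Icc isClosed_Iic
  have hA_bdd : BddBelow A := ⟨a, fun s hs => hs.1.1⟩
  obtain ⟨⟨has, hsb⟩, hzs⟩ : sInf A ∈ A :=
    hA_closed.csInf_mem ⟨b, ⟨hab, le_rfl⟩, hb⟩ hA_bdd
  refine ⟨sInf A, ⟨has.lt_of_ne ?_, hsb⟩, hzs, fun y hy => ?_⟩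
  · intro h
    rw [← h] at hzs
    exact (hzs.trans_lt ha).false
  · by_contra! hzy
    exact hy.2.not_ge (csInf_le hA_bdd ⟨⟨hy.1, hy.2.le.trans hsb⟩, hzy⟩)

theorem le_of_hasDerivAt_nonneg_of_pos {z z' : ℝ → ℝ} {a b : ℝ}
    (hz : ContinuousOn z (Icc a b)) (hz' : ∀ x ∈ Ioo a b, HasDerivAt z (z' x) x)
    (ha : 0 < z a) (hpos : ∀ x ∈ Ioo a b, 0 < z x → 0 ≤ z' x) :
    ∀ x ∈ Icc a b, z a ≤ z x := by
  intro x hx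
  by_contra! hlt
  obtain ⟨s, ⟨has, hsx⟩, hzs, hgt⟩ :=
    exists_first_le_of_continuousOn (c := max (z x) 0) (hz.mono (Icc_subset_Icc le_rfl hx.2))
      (max_lt hlt ha) (le_max_left _ _) hx.1
  have hmono : MonotoneOn z (Icc a s) := by
    refine monotoneOn_of_hasDerivWithinAt_nonneg (f' := z') (convex_Icc a s)
      (hz.mono (Icc_subset_Icc le_rfl (hsx.trans hx.2))) (fun y hy => ?_) (fun y hy => ?_)
    all_goals rw [interior_Icc] at hy
    · exact (hz' y ⟨hy.1, hy.2.trans_le (hsx.trans hx.2)⟩).hasDerivWithinAt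
    · exact hpos y ⟨hy.1, hy.2.trans_le (hsx.trans hx.2)⟩
        ((le_max_right _ _).trans_lt (hgt y ⟨hy.1.le, hy.2⟩))
  have := hmono (left_mem_Icc.2 has.le) (right_mem_Icc.2 has.le) has.le
  linarith [max_lt hlt ha]

theorem mul_exp_neg_le_of_hasDerivAt {v v' : ℝ → ℝ} {a b M : ℝ}
    (hv : ContinuousOn v (Icc a b)) (hv' : ∀ x ∈ Ioo a b, HasDerivAt v (v' x) x)
    (ha : 0 < v a) (hbound : ∀ x ∈ Ioo a b, 0 < v x → -(M * v x) ≤ v' x) :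
    ∀ x ∈ Icc a b, v a * exp (-(M * (x - a))) ≤ v x := by
  have hexp : ∀ x, HasDerivAt (fun x => exp (M * (x - a))) (exp (M * (x - a)) * M) x := by
    intro x
    simpa using (((hasDerivAt_id x).sub_const a).const_mul M).exp
  have key := le_of_hasDerivAt_nonneg_of_pos (z := fun x => v x * exp (M * (x - a)))
    (hv.mul (by fun_prop)) (fun x hx => (hv' x hx).mul (hexp x)) (by simpa using ha)
    (fun x hx hzx => by
      have hvx : 0 < v x := pos_of_mul_pos_left hzx (exp_pos _).le
      nlinarith [hbound x hx hvx, exp_pos (M * (x - a))])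
  intro x hx
  have := key x hx
  simp only [sub_self, mul_zero, exp_zero, mul_one] at this
  rwa [exp_neg, mul_inv_le_iff₀ (exp_pos _)]

theorem setIntegral_mul_sub_mul_add_mul_nonneg {α : Type*} [MeasurableSpace α] {μ : Measure α}
    {s : Set α} (hs : MeasurableSet s) {a Φ f : α → ℝ} {c Φ₀ : ℝ}
    (ha : ∀ x ∈ s, 0 ≤ a x) (hΦ : ∀ x ∈ s, Φ₀ ≤ Φ x) (hf : ∀ x ∈ s, 0 ≤ f x)
    (haf : IntegrableOn (fun x => a x * f x) s μ)
    (haΦf : IntegrableOn (fun x => a x * (Φ x - c) * f x) s μ) :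
    0 ≤ (∫ x in s, a x * (Φ x - c) * f x ∂μ) + (c - Φ₀) * ∫ x in s, a x * f x ∂μ := by
  have hsplit : (∫ x in s, a x * (Φ x - c) * f x ∂μ) + (c - Φ₀) * ∫ x in s, a x * f x ∂μ
      = ∫ x in s, a x * (Φ x - Φ₀) * f x ∂μ := by
    rw [← integral_const_mul, ← integral_add haΦf (haf.const_mul _)]
    congr 1 with x
    ring
  rw [hsplit]
  exact setIntegral_nonneg hs fun x hx =>
    mul_nonneg (mul_nonneg (ha x hx) (sub_nonneg.2 (hΦ x hx))) (hf x hx)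

/-- Key estimate for the global-existence criterion (Theorem 1.7, part 1): if `f` is a
solution of the Lifshitz–Slyozov equation on `[0,T)`, `T < ∞`, with `Φ(x) ≥ Φ₀` for all
`x > 0`, then `u(t) − Φ₀ ≥ (u(0) − Φ₀) · exp(−T · sup_{t ∈ (0,T)} ∫₀^∞ a f dx) > 0` for
all `t ∈ [0,T)`; in particular `u` stays strictly above `Φ₀`. -/
theorem stmt13 (T Φ₀ : ℝ) (hT : 0 < T)
    (a Φ : ℝ → ℝ) (f : ℝ → ℝ → ℝ) (u : ℝ → ℝ)
    (ha_nonneg : ∀ x > (0:ℝ), 0 ≤ a x)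
    (hΦ : ∀ x > (0:ℝ), Φ₀ ≤ Φ x)
    (hf_nonneg : ∀ t ∈ Set.Ico (0:ℝ) T, ∀ x > (0:ℝ), 0 ≤ f t x)
    (hf_int : ∀ t ∈ Set.Ico (0:ℝ) T,
      MeasureTheory.IntegrableOn (fun x => a x * f t x) (Set.Ioi 0))
    (hfΦ_int : ∀ t ∈ Set.Ico (0:ℝ) T,
      MeasureTheory.IntegrableOn (fun x => a x * (Φ x - u t) * f t x) (Set.Ioi 0))
    (hu0 : Φ₀ < u 0)
    (hu' : ∀ t ∈ Set.Ico (0:ℝ) T,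
      HasDerivAt u (∫ x in Set.Ioi (0:ℝ), a x * (Φ x - u t) * f t x) t)
    (hbdd : BddAbove ((fun t => ∫ x in Set.Ioi (0:ℝ), a x * f t x) '' Set.Ioo 0 T)) :
    ∀ t ∈ Set.Ico (0:ℝ) T,
      0 < (u 0 - Φ₀) *
          Real.exp (-(T * sSup ((fun t => ∫ x in Set.Ioi (0:ℝ), a x * f t x) ''
            Set.Ioo 0 T))) ∧
      (u 0 - Φ₀) *
          Real.exp (-(T * sSup ((fun t => ∫ x in Set.Ioi (0:ℝ), a x * f t x) ''
            Set.Ioo 0 T))) ≤ u t - Φ₀ := by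
  intro t ht
  set g : ℝ → ℝ := fun t => ∫ x in Ioi (0:ℝ), a x * f t x
  set M := sSup (g '' Ioo 0 T)
  have hg_le : ∀ s ∈ Ioo 0 T, g s ≤ M := fun s hs => le_csSup hbdd (mem_image_of_mem g hs)
  have hM : 0 ≤ M := (setIntegral_nonneg measurableSet_Ioi fun x hx =>
    mul_nonneg (ha_nonneg x hx) (hf_nonneg (T / 2) ⟨by linarith, by linarith⟩ x hx)).trans
      (hg_le (T / 2) ⟨by linarith, by linarith⟩)
  have hsub : Icc 0 t ⊆ Ico 0 T := Icc_subset_Ico_right ht.2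
  have hv := mul_exp_neg_le_of_hasDerivAt (v := fun s => u s - Φ₀) (M := M)
    (fun s hs => ((hu' s (hsub hs)).sub_const Φ₀).continuousAt.continuousWithinAt)
    (fun s hs => (hu' s (hsub (Ioo_subset_Icc_self hs))).sub_const Φ₀) (sub_pos.2 hu0)
    (fun s hs hvs => by
      have hs' := hsub (Ioo_subset_Icc_self hs)
      have := setIntegral_mul_sub_mul_add_mul_nonneg measurableSet_Ioi ha_nonneg hΦ
        (hf_nonneg s hs') (hf_int s hs') (hfΦ_int s hs')
      nlinarith [hg_le s ⟨hs.1, hs.2.trans ht.2⟩])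
    t (right_mem_Icc.2 ht.1)
  refine ⟨mul_pos (sub_pos.2 hu0) (exp_pos _), le_trans ?_ hv⟩
  refine mul_le_mul_of_nonneg_left (exp_le_exp.2 ?_) (sub_pos.2 hu0).le
  nlinarith [ht.2]
end

section
/- Suppose there exist C > 0 and x* > 0 such that −Φ'(x) < C/a(x) for all x ∈ (0,x*) (assumption H8a). Define φ(x) = 1/a(x) for x ≤ x̄ and φ(x) = 1/a(x̄) for x > x̄, with x̄ = x* ∧ 1. Then, assuming a' and b' are bounded on (x̄,∞) and 0 ≤ u₁(t) ≤ ρ, there exists K > 0 such that ∂ₓ[v₁(t,x)φ(x)] ≤ K φ(x) for all x > 0 (x ≠ x̄) and t ∈ (0,T), where v₁(t,x) = a(x)u₁(t) − b(x). Moreover φ(x) ≥ 1/‖a‖_{L^∞(0,x̄)} and a(x)φ(x) ≤ 1 for x < x̄. -/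
/-!
Below `x̄` the weight is `φ = 1/a`, so `v₁ φ = u₁ - Φ` and its derivative `-Φ'` is bounded by
`C / a = C φ` by (H8a). Above `x̄` the weight is constant, so the derivative is `(a' u₁ - b') φ`,
bounded by `(‖a'‖ ρ + ‖b'‖) φ`. The lower bound on `φ` holds because `a` is continuous, hence
bounded on `(0, x̄]`, and `φ(x)` is always `1/a` at a point of `(0, x̄]`.
-/

open Set Filter Topology

/-- The weight `φ`, with `xb` in the role of `x̄`. -/
noncomputable def gronwallWeight (a : ℝ → ℝ) (xb y : ℝ) : ℝ :=
  if y ≤ xb then 1 / a y else 1 / a xb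

namespace gronwallWeight

variable {a b : ℝ → ℝ} {xb x : ℝ}

theorem of_le (hx : x ≤ xb) : gronwallWeight a xb x = 1 / a x := if_pos hx

theorem of_gt (hx : xb < x) : gronwallWeight a xb x = 1 / a xb := if_neg hx.not_ge

theorem eventuallyEq_of_lt (hx : x < xb) : gronwallWeight a xb =ᶠ[𝓝 x] fun y => 1 / a y := by
  filter_upwards [Iio_mem_nhds hx] with y hy using of_le (le_of_lt hy)

theorem eventuallyEq_of_gt (hx : xb < x) : gronwallWeight a xb =ᶠ[𝓝 x] fun _ => 1 / a xb := by
  filter_upwards [Ioi_mem_nhds hx] with y hy using of_gt hy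

theorem mul_self_eq_one (hx : x ≤ xb) (ha : a x ≠ 0) : a x * gronwallWeight a xb x = 1 := by
  rw [of_le hx, mul_one_div_cancel ha]

theorem hasDerivAt_mul_of_lt {u Φ'x : ℝ} (hx : x < xb) (ha : ∀ᶠ y in 𝓝 x, a y ≠ 0)
    (hΦ : HasDerivAt (fun y => b y / a y) Φ'x x) :
    HasDerivAt (fun y => (a y * u - b y) * gronwallWeight a xb y) (-Φ'x) x := by
  have hv : HasDerivAt (fun y => u - b y / a y) (-Φ'x) x := by
    simpa using hΦ.const_sub u
  refine hv.congr_of_eventuallyEq ?_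
  filter_upwards [eventuallyEq_of_lt hx, ha] with y hφ hay
  rw [hφ]
  field_simp

theorem hasDerivAt_mul_of_gt {u a'x b'x : ℝ} (hx : xb < x) (ha : HasDerivAt a a'x x)
    (hb : HasDerivAt b b'x x) :
    HasDerivAt (fun y => (a y * u - b y) * gronwallWeight a xb y)
      ((a'x * u - b'x) * gronwallWeight a xb x) x := by
  rw [of_gt hx]
  refine (((ha.mul_const u).sub hb).mul_const _).congr_of_eventuallyEq ?_
  filter_upwards [eventuallyEq_of_gt hx] with y hφ
  rw [hφ]
  rfl

theorem inv_sSup_le (hbdd : BddAbove (a '' Ioc 0 xb)) (ha : ∀ y ∈ Ioc 0 xb, 0 < a y)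
    (hxb : 0 < xb) (hx : 0 < x) : (sSup (a '' Ioc 0 xb))⁻¹ ≤ gronwallWeight a xb x := by
  have key : ∀ y ∈ Ioc 0 xb, (sSup (a '' Ioc 0 xb))⁻¹ ≤ 1 / a y := fun y hy => by
    rw [one_div]
    exact inv_anti₀ (ha y hy) (le_csSup hbdd (mem_image_of_mem a hy))
  rcases le_or_gt x xb with hle | hgt
  · rw [of_le hle]; exact key x ⟨hx, hle⟩
  · rw [of_gt hgt]; exact key xb ⟨hxb, le_rfl⟩

end gronwallWeight

theorem mul_sub_le_of_abs_le {α β u ρ Ma Mb : ℝ} (hα : |α| ≤ Ma) (hβ : |β| ≤ Mb)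
    (hu0 : 0 ≤ u) (huρ : u ≤ ρ) : α * u - β ≤ Ma * ρ + Mb := by
  have hαu : α * u ≤ Ma * ρ :=
    calc α * u ≤ |α| * u := mul_le_mul_of_nonneg_right (le_abs_self α) hu0
      _ ≤ Ma * ρ := mul_le_mul hα huρ hu0 ((abs_nonneg α).trans hα)
  linarith [neg_le_abs β]

theorem stmt17_general (T ρ C xstar : ℝ) (hC : 0 < C)
    (hxstar : 0 < xstar)
    (a b a' b' Φ' : ℝ → ℝ) (u₁ : ℝ → ℝ)
    (ha_cont : ContinuousOn a (Set.Ici 0))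
    (ha_pos : ∀ x > (0:ℝ), 0 < a x)
    (ha' : ∀ x > (0:ℝ), HasDerivAt a (a' x) x)
    (hb' : ∀ x > (0:ℝ), HasDerivAt b (b' x) x)
    (hΦ' : ∀ x > (0:ℝ), HasDerivAt (fun y => b y / a y) (Φ' x) x)
    -- (H8a)
    (hH8a : ∀ x ∈ Set.Ioo (0:ℝ) xstar, -Φ' x < C / a x)
    -- boundedness of `a'`, `b'` beyond `x̄ = min x* 1`
    (ha'_bdd : ∃ Ma, ∀ x > min xstar 1, |a' x| ≤ Ma)
    (hb'_bdd : ∃ Mb, ∀ x > min xstar 1, |b' x| ≤ Mb)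
    (hu₁ : ∀ t ∈ Set.Ioo (0:ℝ) T, 0 ≤ u₁ t ∧ u₁ t ≤ ρ) :
    ∃ K > (0:ℝ), ∀ t ∈ Set.Ioo (0:ℝ) T, ∀ x > (0:ℝ), x ≠ min xstar 1 →
      (∃ d : ℝ,
        HasDerivAt (fun y => (a y * u₁ t - b y) *
          (if y ≤ min xstar 1 then 1 / a y else 1 / a (min xstar 1))) d x ∧
        d ≤ K * (if x ≤ min xstar 1 then 1 / a x else 1 / a (min xstar 1))) ∧
      (sSup (a '' Set.Ioc 0 (min xstar 1)))⁻¹ ≤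
        (if x ≤ min xstar 1 then 1 / a x else 1 / a (min xstar 1)) ∧
      (x < min xstar 1 →
        a x * (if x ≤ min xstar 1 then 1 / a x else 1 / a (min xstar 1)) ≤ 1) := by
  obtain ⟨Ma, hMa⟩ := ha'_bdd
  obtain ⟨Mb, hMb⟩ := hb'_bdd
  set xb := min xstar 1
  have hxb : 0 < xb := lt_min hxstar one_pos
  have hbdd : BddAbove (a '' Ioc 0 xb) :=
    ((isCompact_Icc.image_of_continuousOn (ha_cont.mono fun _ hy => hy.1)).bddAbove).mono
      (image_mono Ioc_subset_Icc_self)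
  set K := C + max 0 (Ma * ρ + Mb)
  refine ⟨K, by positivity, fun t ht x hx hxne =>
    ⟨?_, gronwallWeight.inv_sSup_le hbdd (fun y hy => ha_pos y hy.1) hxb hx,
      fun hlt => (gronwallWeight.mul_self_eq_one hlt.le (ha_pos x hx).ne').le⟩⟩
  rcases lt_or_gt_of_ne hxne with hlt | hgt
  · refine ⟨_, gronwallWeight.hasDerivAt_mul_of_lt hlt
      (eventually_of_mem (Ioi_mem_nhds hx) fun y hy => (ha_pos y hy).ne') (hΦ' x hx), ?_⟩
    have hCK : C / a x ≤ K * gronwallWeight a xb x := by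
      rw [gronwallWeight.of_le hlt.le, ← div_eq_mul_one_div]
      gcongr
      · exact (ha_pos x hx).le
      · exact le_add_of_nonneg_right (le_max_left _ _)
    exact ((hH8a x ⟨hx, hlt.trans_le (min_le_left _ _)⟩).trans_le hCK).le
  · refine ⟨_, gronwallWeight.hasDerivAt_mul_of_gt hgt (ha' x hx) (hb' x hx), ?_⟩
    change _ ≤ K * gronwallWeight a xb x
    rw [gronwallWeight.of_gt hgt]
    gcongr
    · exact one_div_nonneg.mpr (ha_pos xb hxb).le
    · calc a' x * u₁ t - b' x ≤ Ma * ρ + Mb :=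
            mul_sub_le_of_abs_le (hMa x hgt) (hMb x hgt) (hu₁ t ht).1 (hu₁ t ht).2
        _ ≤ K := (le_max_right _ _).trans (le_add_of_nonneg_left hC.le)

/-- Lemma 2.3, case 1 (the Gronwall weight under (H8a)): suppose
`−Φ'(x) < C / a(x)` on `(0, x*)`, set `x̄ = min x* 1` and
`φ(x) = 1/a(x)` for `x ≤ x̄`, `φ(x) = 1/a(x̄)` for `x > x̄`.  If `a'` and `b'` are
bounded on `(x̄, ∞)` and `0 ≤ u₁(t) ≤ ρ`, then there is `K > 0` with
`∂ₓ[v₁(t,·) φ](x) ≤ K φ(x)` for all `x > 0`, `x ≠ x̄`, and `t ∈ (0,T)`, where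
`v₁(t,x) = a(x) u₁(t) − b(x)`; moreover `φ ≥ 1/‖a‖_{L^∞(0,x̄)}` everywhere and
`a φ ≤ 1` on `(0, x̄)`. -/
theorem stmt17 (T ρ C xstar : ℝ) (hT : 0 < T) (hρ : 0 < ρ) (hC : 0 < C)
    (hxstar : 0 < xstar)
    (a b a' b' Φ' : ℝ → ℝ) (u₁ : ℝ → ℝ)
    (ha_cont : ContinuousOn a (Set.Ici 0)) (hb_cont : ContinuousOn b (Set.Ici 0))
    (ha_nonneg : ∀ x ≥ (0:ℝ), 0 ≤ a x) (hb_nonneg : ∀ x ≥ (0:ℝ), 0 ≤ b x)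
    (ha_pos : ∀ x > (0:ℝ), 0 < a x)
    (ha' : ∀ x > (0:ℝ), HasDerivAt a (a' x) x)
    (hb' : ∀ x > (0:ℝ), HasDerivAt b (b' x) x)
    (hΦ' : ∀ x > (0:ℝ), HasDerivAt (fun y => b y / a y) (Φ' x) x)
    -- (H8a)
    (hH8a : ∀ x ∈ Set.Ioo (0:ℝ) xstar, -Φ' x < C / a x)
    -- boundedness of `a'`, `b'` beyond `x̄ = min x* 1`
    (ha'_bdd : ∃ Ma, ∀ x > min xstar 1, |a' x| ≤ Ma)
    (hb'_bdd : ∃ Mb, ∀ x > min xstar 1, |b' x| ≤ Mb)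
    (hu₁ : ∀ t ∈ Set.Ioo (0:ℝ) T, 0 ≤ u₁ t ∧ u₁ t ≤ ρ) :
    ∃ K > (0:ℝ), ∀ t ∈ Set.Ioo (0:ℝ) T, ∀ x > (0:ℝ), x ≠ min xstar 1 →
      (∃ d : ℝ,
        HasDerivAt (fun y => (a y * u₁ t - b y) *
          (if y ≤ min xstar 1 then 1 / a y else 1 / a (min xstar 1))) d x ∧
        d ≤ K * (if x ≤ min xstar 1 then 1 / a x else 1 / a (min xstar 1))) ∧
      (sSup (a '' Set.Ioc 0 (min xstar 1)))⁻¹ ≤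
        (if x ≤ min xstar 1 then 1 / a x else 1 / a (min xstar 1)) ∧
      (x < min xstar 1 →
        a x * (if x ≤ min xstar 1 then 1 / a x else 1 / a (min xstar 1)) ≤ 1) :=
  stmt17_general T ρ C xstar hC hxstar a b a' b' Φ' u₁ ha_cont ha_pos ha' hb' hΦ' hH8a ha'_bdd
    hb'_bdd hu₁
end
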